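/- arXiv:2410.21116 — 6 statements merged into one kernel-verified Lean document; each statement's English description precedes it below -/
import Mathlib

section
/- Let a_1,...,a_s and b_1,...,b_s be non-negative integers with a_i + b_i ≥ 2 for each i, and set a = Σ a_i, b = Σ b_i. If b ≥ a, then Σ_{i=1}^{s} a_i·b_i ≤ a·(b − (s−1)). -/
theorem stmt0 (s : ℕ) (hs : 1 ≤ s) (a b : Fin s → ℤ)
    (ha : ∀ i, 0 ≤ a i) (hb : ∀ i, 0 ≤ b i)
    (hab : ∀ i, 2 ≤ a i + b i)
    (hba : (∑ i, a i) ≤ ∑ i, b i) :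
    ∑ i, a i * b i ≤ (∑ i, a i) * ((∑ i, b i) - ((s : ℤ) - 1)) := by
  classical
  set A : ℤ := ∑ i, a i with hA
  set B : ℤ := ∑ i, b i with hB
  have hA0 : 0 ≤ A := Finset.sum_nonneg fun i _ => ha i
  -- A + B ≥ 2s
  have hAB2 : 2 * (s : ℤ) ≤ A + B := by
    have : ∑ i : Fin s, (2 : ℤ) ≤ ∑ i : Fin s, (a i + b i) :=
      Finset.sum_le_sum fun i _ => hab i
    simpa [Finset.sum_add_distrib, Finset.sum_const, Finset.card_univ,
      mul_comm, ← hA, ← hB] using this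
  have hBs : (s : ℤ) ≤ B := by linarith
  -- key: suffices 0 ≤ ∑ (b j - 1) * (A - a j)
  have hkey : ∑ j, (b j - 1) * (A - a j)
      = A * (B - ((s : ℤ) - 1)) - ∑ i, a i * b i := by
    have h1 : ∀ j : Fin s, (b j - 1) * (A - a j) = A * b j - a j * b j - A + a j := by
      intro j; ring
    rw [Finset.sum_congr rfl fun j _ => h1 j]
    simp only [Finset.sum_add_distrib, Finset.sum_sub_distrib, ← Finset.mul_sum,
      Finset.sum_const, Finset.card_univ, Fintype.card_fin, nsmul_eq_mul, ← hA, ← hB]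
    ring
  suffices hpos : 0 ≤ ∑ j, (b j - 1) * (A - a j) by linarith [hkey ▸ hpos]
  -- split into Z (b = 0) and P (b ≠ 0)
  set Z : Finset (Fin s) := Finset.univ.filter (fun i => b i = 0) with hZ
  set P : Finset (Fin s) := Finset.univ.filter (fun i => ¬ b i = 0) with hP
  have hsplit : ∑ j ∈ Z, (b j - 1) * (A - a j) + ∑ j ∈ P, (b j - 1) * (A - a j)
      = ∑ j, (b j - 1) * (A - a j) :=
    Finset.sum_filter_add_sum_filter_not _ _ _
  set t : ℕ := Z.card with ht
  set p : ℕ := P.card with hpdef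
  have hpt : (p : ℤ) + (t : ℤ) = (s : ℤ) := by
    have := Finset.card_filter_add_card_filter_not
      (s := (Finset.univ : Finset (Fin s))) (p := fun i => b i = 0)
    have h2 : t + p = s := by
      simpa [← hZ, ← hP, Finset.card_univ] using this
    exact_mod_cast by omega
  set AZ : ℤ := ∑ j ∈ Z, a j with hAZ
  -- Z sum value
  have hZsum : ∑ j ∈ Z, (b j - 1) * (A - a j) = AZ - (t : ℤ) * A := by
    have h1 : ∀ j ∈ Z, (b j - 1) * (A - a j) = a j - A := by
      intro j hj
      have : b j = 0 := (Finset.mem_filter.mp hj).2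
      rw [this]; ring
    rw [Finset.sum_congr rfl h1, Finset.sum_sub_distrib, Finset.sum_const,
      nsmul_eq_mul, ← hAZ, ← ht]
  -- AZ ≥ 2t
  have hAZ2t : 2 * (t : ℤ) ≤ AZ := by
    have h1 : ∀ j ∈ Z, (2 : ℤ) ≤ a j := by
      intro j hj
      have hbj : b j = 0 := (Finset.mem_filter.mp hj).2
      have := hab j; rw [hbj] at this; linarith
    calc 2 * (t : ℤ) = ∑ _j ∈ Z, (2 : ℤ) := by
          rw [Finset.sum_const, nsmul_eq_mul, ← ht]; ring
      _ ≤ AZ := Finset.sum_le_sum h1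
  -- P is nonempty
  have hPne : P.Nonempty := by
    by_contra hc
    rw [Finset.not_nonempty_iff_eq_empty] at hc
    have hball : ∀ i : Fin s, b i = 0 := by
      intro i
      by_contra hbi
      have : i ∈ P := Finset.mem_filter.mpr ⟨Finset.mem_univ i, hbi⟩
      simp [hc] at this
    have : B = 0 := by
      rw [hB]; exact Finset.sum_eq_zero fun i _ => hball i
    have : (1 : ℤ) ≤ (s : ℤ) := by exact_mod_cast hs
    omega
  obtain ⟨μ, hμP, hμmax⟩ := P.exists_max_image a hPne
  have hbμ : b μ ≠ 0 := (Finset.mem_filter.mp hμP).2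
  have hbμ1 : 1 ≤ b μ := by have := hb μ; omega
  -- A ≥ a μ + AZ
  have hμZ : μ ∉ Z := by
    intro h
    exact hbμ (Finset.mem_filter.mp h).2
  have hAM : a μ + AZ ≤ A := by
    have hsub : insert μ Z ⊆ Finset.univ := Finset.subset_univ _
    have h1 : ∑ j ∈ insert μ Z, a j ≤ A :=
      Finset.sum_le_sum_of_subset_of_nonneg hsub (fun i _ _ => ha i)
    rwa [Finset.sum_insert hμZ] at h1
  -- 2B ≥ 2(s-1) + aμ + bμ  (via A + B ≥ ...)
  have hbig : 2 * ((s : ℤ) - 1) + (a μ + b μ) ≤ A + B := by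
    have h1 : a μ + b μ + ∑ j ∈ Finset.univ.erase μ, (a j + b j)
        = ∑ j : Fin s, (a j + b j) :=
      Finset.add_sum_erase _ (fun j => a j + b j) (Finset.mem_univ μ)
    have h2 : ∑ _j ∈ Finset.univ.erase μ, (2 : ℤ)
        ≤ ∑ j ∈ Finset.univ.erase μ, (a j + b j) :=
      Finset.sum_le_sum fun j _ => hab j
    have h3 : (Finset.univ.erase μ).card = s - 1 := by
      rw [Finset.card_erase_of_mem (Finset.mem_univ μ), Finset.card_univ, Fintype.card_fin]
    have h4 : ∑ j : Fin s, (a j + b j) = A + B := by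
      rw [Finset.sum_add_distrib, ← hA, ← hB]
    rw [Finset.sum_const, h3, nsmul_eq_mul] at h2
    have h5 : ((s - 1 : ℕ) : ℤ) = (s : ℤ) - 1 := by
      have : (1 : ℤ) ≤ (s : ℤ) := by exact_mod_cast hs
      omega
    rw [h5] at h2
    linarith [h1, h2, h4.symm ▸ h1]
  -- P sum lower bound
  have hPsum : ((B - (p : ℤ))) * (A - a μ) ≤ ∑ j ∈ P, (b j - 1) * (A - a j) := by
    have hterm : ∀ j ∈ P, (b j - 1) * (A - a μ) ≤ (b j - 1) * (A - a j) := by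
      intro j hj
      have hbj : b j ≠ 0 := (Finset.mem_filter.mp hj).2
      have hbj1 : (0 : ℤ) ≤ b j - 1 := by have := hb j; omega
      have haj : a j ≤ a μ := hμmax j hj
      exact mul_le_mul_of_nonneg_left (by linarith) hbj1
    have h1 : ∑ j ∈ P, (b j - 1) * (A - a μ) ≤ ∑ j ∈ P, (b j - 1) * (A - a j) :=
      Finset.sum_le_sum hterm
    have h2 : ∑ j ∈ P, (b j - 1) * (A - a μ) = (B - (p : ℤ)) * (A - a μ) := by
      rw [← Finset.sum_mul]
      congr 1
      have hZb : ∑ j ∈ Z, b j = 0 :=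
        Finset.sum_eq_zero fun j hj => (Finset.mem_filter.mp hj).2
      have hPb : ∑ j ∈ P, b j = B := by
        have h := Finset.sum_filter_add_sum_filter_not Finset.univ (fun i => b i = 0) b
        rw [← hZ, ← hP] at h
        linarith [h, hZb, hB.le, hB.ge]
      rw [Finset.sum_sub_distrib, hPb, Finset.sum_const, nsmul_eq_mul, ← hpdef]
      ring
    linarith
  -- final arithmetic
  have ht0 : (0 : ℤ) ≤ (t : ℤ) := Int.natCast_nonneg t
  have hfin : 0 ≤ (AZ - (t : ℤ) * A) + (B - (p : ℤ)) * (A - a μ) := by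
    have hC : (0 : ℤ) ≤ B - s := by linarith
    have hAaμ : 2 * (t : ℤ) ≤ A - a μ := by linarith
    have h2C : (1 : ℤ) ≤ 2 * (B - s) + 2 - a μ := by linarith
    have hh1 : 0 ≤ (B - (s : ℤ)) * (A - a μ - 2 * t) :=
      mul_nonneg hC (by linarith)
    have hh2 : 0 ≤ (t : ℤ) * (2 * (B - s) + 2 - a μ) :=
      mul_nonneg ht0 (by linarith)
    nlinarith [hpt, hAZ2t]
  linarith [hsplit, hZsum ▸ hfin, hPsum]
end

section
/- For any bipartite graph G, the spectral radius ρ(G) of its adjacency matrix satisfies ρ(G) ≤ √(e(G)), where e(G) is the number of edges, with equality if and only if G is a complete bipartite graph together with possibly some isolated vertices. -/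
open Finset Matrix SimpleGraph

section NosalHelpers

variable {V : Type*} [Fintype V] [DecidableEq V] (G : SimpleGraph V) [DecidableRel G.Adj]

set_option linter.unusedSectionVars false

private theorem nosal_mem_spec_iff (M : Matrix V V ℝ) (μ : ℝ) :
    μ ∈ spectrum ℝ M ↔ ∃ v, v ≠ 0 ∧ M *ᵥ v = μ • v := by
  rw [← AlgEquiv.spectrum_eq (Matrix.toLinAlgEquiv' (R := ℝ) (n := V)) M,
      ← Module.End.hasEigenvalue_iff_mem_spectrum, Module.End.hasEigenvalue_iff,
      Submodule.ne_bot_iff]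
  constructor
  · rintro ⟨v, hv, hv0⟩
    rw [Module.End.mem_eigenspace_iff] at hv
    exact ⟨v, hv0, by simpa [Matrix.toLinAlgEquiv'_apply] using hv⟩
  · rintro ⟨v, hv0, hv⟩
    refine ⟨v, ?_, hv0⟩
    rw [Module.End.mem_eigenspace_iff]
    simpa [Matrix.toLinAlgEquiv'_apply] using hv

private theorem nosal_total_sum : ∑ u, ∑ w, G.adjMatrix ℝ u w = 2 * (G.edgeSet.ncard : ℝ) := by
  have h1 : ∀ u, ∑ w, G.adjMatrix ℝ u w = (G.degree u : ℝ) := by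
    intro u
    simp [adjMatrix_apply, degree, neighborFinset, sum_boole]
  have h2 : G.edgeSet.ncard = G.edgeFinset.card := by
    rw [← Set.ncard_coe_finset]; simp
  rw [h2]
  calc ∑ u, ∑ w, G.adjMatrix ℝ u w = ∑ u, (G.degree u : ℝ) :=
        Finset.sum_congr rfl fun u _ => h1 u
    _ = ((∑ u, G.degree u : ℕ) : ℝ) := by push_cast; ring
    _ = 2 * (G.edgeFinset.card : ℝ) := by rw [G.sum_degrees_eq_twice_card_edges]; push_cast; ring

private theorem nosal_block_split (p : V → Prop) [DecidablePred p]
    (hp : ∀ u v, G.Adj u v → (p u ↔ ¬ p v)) (f : V → V → ℝ)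
    (hsym : ∀ u w, f u w = f w u) (hvan : ∀ u w, ¬ G.Adj u w → f u w = 0) :
    ∑ u, ∑ w, f u w
      = 2 * ∑ u ∈ univ.filter p, ∑ w ∈ univ.filter (fun x => ¬ p x), f u w := by
  have hT : ∀ u ∈ univ.filter p, ∑ w ∈ univ.filter p, f u w = 0 := by
    intro u hu
    refine Finset.sum_eq_zero fun w hw => ?_
    simp only [mem_filter] at hu hw
    by_cases h : G.Adj u w
    · exact absurd hw.2 ((hp u w h).mp hu.2)
    · exact hvan u w h
  have hF : ∀ u ∈ univ.filter (fun x => ¬ p x), ∑ w ∈ univ.filter (fun x => ¬ p x), f u w = 0 := by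
    intro u hu
    refine Finset.sum_eq_zero fun w hw => ?_
    simp only [mem_filter] at hu hw
    by_cases h : G.Adj u w
    · exact absurd ((hp u w h).mpr hw.2) hu.2
    · exact hvan u w h
  have hswap : ∑ u ∈ univ.filter (fun x => ¬ p x), ∑ w ∈ univ.filter p, f u w
      = ∑ u ∈ univ.filter p, ∑ w ∈ univ.filter (fun x => ¬ p x), f u w := by
    rw [Finset.sum_comm]
    exact Finset.sum_congr rfl fun u _ => Finset.sum_congr rfl fun w _ => (hsym u w).symm
  calc ∑ u, ∑ w, f u w
      = ∑ u ∈ univ.filter p, ∑ w, f u w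
        + ∑ u ∈ univ.filter (fun x => ¬ p x), ∑ w, f u w := by
        rw [Finset.sum_filter_add_sum_filter_not]
    _ = (∑ u ∈ univ.filter p, (∑ w ∈ univ.filter p, f u w
          + ∑ w ∈ univ.filter (fun x => ¬ p x), f u w))
        + ∑ u ∈ univ.filter (fun x => ¬ p x), (∑ w ∈ univ.filter p, f u w
          + ∑ w ∈ univ.filter (fun x => ¬ p x), f u w) := by
        simp_rw [Finset.sum_filter_add_sum_filter_not]
    _ = _ := by
        rw [Finset.sum_add_distrib, Finset.sum_add_distrib,
          Finset.sum_eq_zero hT, Finset.sum_eq_zero fun u hu => hF u hu, hswap]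
        ring

private theorem nosal_cross_sum (p : V → Prop) [DecidablePred p]
    (hp : ∀ u v, G.Adj u v → (p u ↔ ¬ p v)) :
    ∑ u ∈ univ.filter p, ∑ w ∈ univ.filter (fun x => ¬ p x), G.adjMatrix ℝ u w
      = (G.edgeSet.ncard : ℝ) := by
  have h := nosal_block_split G p hp (fun u w => G.adjMatrix ℝ u w)
    (fun u w => by simp [adjMatrix_apply, G.adj_comm])
    (fun u w h => by simp [adjMatrix_apply, h])
  rw [nosal_total_sum] at h
  linarith

private theorem nosal_quad_form {v : V → ℝ} {μ : ℝ} (hv : G.adjMatrix ℝ *ᵥ v = μ • v) :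
    μ * ∑ u, (v u)^2 = ∑ u, ∑ w, G.adjMatrix ℝ u w * v u * v w := by
  have h : ∀ u, v u * (G.adjMatrix ℝ *ᵥ v) u = μ * (v u)^2 := by
    intro u; rw [hv]; simp [Pi.smul_apply]; ring
  calc μ * ∑ u, (v u)^2 = ∑ u, v u * (G.adjMatrix ℝ *ᵥ v) u := by
        rw [Finset.mul_sum]; exact Finset.sum_congr rfl fun u _ => (h u).symm
    _ = ∑ u, ∑ w, G.adjMatrix ℝ u w * v u * v w := by
        refine Finset.sum_congr rfl fun u _ => ?_
        simp only [Matrix.mulVec, dotProduct, Finset.mul_sum]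
        exact Finset.sum_congr rfl fun w _ => by ring

private theorem nosal_key (p : V → Prop) [DecidablePred p]
    (hp : ∀ u v, G.Adj u v → (p u ↔ ¬ p v))
    (he : 0 < (G.edgeSet.ncard : ℝ)) {v : V → ℝ} {μ : ℝ}
    (hv0 : v ≠ 0) (hv : G.adjMatrix ℝ *ᵥ v = μ • v) :
    μ^2 ≤ (G.edgeSet.ncard : ℝ) ∧
      ((μ^2 = (G.edgeSet.ncard : ℝ) ∧ 0 < μ) → ∃ t > (0:ℝ),
        ∀ u ∈ univ.filter p, ∀ w ∈ univ.filter (fun x => ¬ p x),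
          v u * v w = t * G.adjMatrix ℝ u w) := by
  set M := G.adjMatrix ℝ with hM
  set e : ℝ := (G.edgeSet.ncard : ℝ) with he'
  set T := univ.filter p with hT
  set F := univ.filter (fun x => ¬ p x) with hF
  set s := ∑ u, (v u)^2 with hs'
  set a := ∑ u ∈ T, (v u)^2 with ha'
  set b := ∑ u ∈ F, (v u)^2 with hb'
  set Q := ∑ u ∈ T, ∑ w ∈ F, M u w * v u * v w with hQ'
  have hs : 0 < s := by
    obtain ⟨u, hu⟩ := Function.ne_iff.mp hv0
    exact Finset.sum_pos' (fun i _ => sq_nonneg _) ⟨u, Finset.mem_univ u,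
      lt_of_le_of_ne (sq_nonneg _) (Ne.symm (pow_ne_zero 2 hu))⟩
  have hab : a + b = s := Finset.sum_filter_add_sum_filter_not _ _ _
  have ha : 0 ≤ a := Finset.sum_nonneg fun i _ => sq_nonneg _
  have hb : 0 ≤ b := Finset.sum_nonneg fun i _ => sq_nonneg _
  have hQeq : μ * s = 2 * Q := by
    rw [nosal_quad_form G hv, nosal_block_split G p hp (fun u w => M u w * v u * v w)
      (fun u w => by
        show M u w * v u * v w = M w u * v w * v u
        rw [show M u w = M w u from by simp [hM, adjMatrix_apply, G.adj_comm]]; ring)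
      (fun u w h => by simp [hM, adjMatrix_apply, h])]
  have hMsq : ∀ u w, (M u w)^2 = M u w := by
    intro u w; rw [hM, adjMatrix_apply]; split_ifs <;> norm_num
  have hE : ∑ u ∈ T, ∑ w ∈ F, M u w = e := nosal_cross_sum G p hp
  have hprod : ∑ u ∈ T, ∑ w ∈ F, (v u)^2 * (v w)^2 = a * b := by
    rw [ha', Finset.sum_mul]
    exact Finset.sum_congr rfl fun u _ => by rw [hb', Finset.mul_sum]
  have hexp : ∀ t : ℝ, ∑ u ∈ T, ∑ w ∈ F, (v u * v w - t * M u w)^2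
      = a * b - 2 * t * Q + t^2 * e := by
    intro t
    have h1 : ∀ u ∈ T, ∀ w ∈ F, (v u * v w - t * M u w)^2
        = (v u)^2 * (v w)^2 - 2 * t * (M u w * v u * v w) + t^2 * (M u w)^2 :=
      fun u _ w _ => by ring
    calc ∑ u ∈ T, ∑ w ∈ F, (v u * v w - t * M u w)^2
        = ∑ u ∈ T, ∑ w ∈ F, ((v u)^2 * (v w)^2
            - 2 * t * (M u w * v u * v w) + t^2 * (M u w)^2) :=
          Finset.sum_congr rfl fun u hu => Finset.sum_congr rfl fun w hw => h1 u hu w hw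
      _ = (∑ u ∈ T, ∑ w ∈ F, (v u)^2 * (v w)^2)
            - 2 * t * (∑ u ∈ T, ∑ w ∈ F, M u w * v u * v w)
            + t^2 * (∑ u ∈ T, ∑ w ∈ F, M u w) := by
          simp only [Finset.sum_sub_distrib, Finset.sum_add_distrib, Finset.mul_sum, hMsq]
      _ = a * b - 2 * t * Q + t^2 * e := by rw [hprod, hE, hQ']
  have hnn : ∀ t : ℝ, 0 ≤ a * b - 2 * t * Q + t^2 * e := by
    intro t
    rw [← hexp t]
    exact Finset.sum_nonneg fun u _ => Finset.sum_nonneg fun w _ => sq_nonneg _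
  have habs : a * b ≤ (s/2)^2 := by nlinarith [sq_nonneg (a - b)]
  have hQsq : Q^2 ≤ e * (a * b) := by
    have h := hnn (Q / e)
    have he2 : e ≠ 0 := ne_of_gt he
    have : a * b - 2 * (Q/e) * Q + (Q/e)^2 * e = a * b - Q^2 / e := by field_simp; ring
    rw [this] at h
    have h2 : (a * b - Q^2/e) * e = e * (a * b) - Q^2 := by field_simp
    nlinarith [mul_nonneg h (le_of_lt he)]
  constructor
  · have hQ2 : μ^2 * s^2 = 4 * Q^2 := by
      calc μ^2 * s^2 = (μ * s)^2 := by ring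
        _ = (2 * Q)^2 := by rw [hQeq]
        _ = 4 * Q^2 := by ring
    have h3 := mul_le_mul_of_nonneg_left habs (le_of_lt he)
    have h4 : μ^2 * s^2 ≤ e * s^2 := by nlinarith
    exact le_of_mul_le_mul_right h4 (show (0:ℝ) < s^2 by positivity)
  · rintro ⟨hμe, hμpos⟩
    refine ⟨s / (2 * μ), by positivity, ?_⟩
    have hteq : a * b - 2 * (s/(2*μ)) * Q + (s/(2*μ))^2 * e = a * b - s^2/4 := by
      have hμ0 : μ ≠ 0 := ne_of_gt hμpos
      have hQ2 : Q = μ * s / 2 := by linarith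
      rw [hQ2, ← hμe]
      field_simp
      ring
    have hzero : ∑ u ∈ T, ∑ w ∈ F, (v u * v w - (s/(2*μ)) * M u w)^2 = 0 := by
      rw [hexp, hteq]
      have := hnn (s/(2*μ))
      rw [hteq] at this
      linarith
    intro u hu w hw
    have h5 := (Finset.sum_eq_zero_iff_of_nonneg
      (fun u _ => Finset.sum_nonneg fun w _ => sq_nonneg _)).mp hzero u hu
    have h6 := (Finset.sum_eq_zero_iff_of_nonneg (fun w _ => sq_nonneg _)).mp h5 w hw
    have := sq_eq_zero_iff.mp h6
    linarith [this]

end NosalHelpers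

/-- adjacency spectral radius of a finite graph -/
noncomputable def specRad {V : Type*} [Fintype V] [DecidableEq V] (G : SimpleGraph V) : ℝ := by
  classical exact sSup (spectrum ℝ (G.adjMatrix ℝ))

section NosalHelpers2

variable {V : Type*} [Fintype V] [DecidableEq V] (G : SimpleGraph V) [DecidableRel G.Adj]

set_option linter.unusedSectionVars false

private theorem nosal_specRad_eq : specRad G = sSup (spectrum ℝ (G.adjMatrix ℝ)) := by
  unfold specRad
  congr!

private theorem nosal_adj_false (h0 : G.edgeSet.ncard = 0) : ∀ u w, ¬ G.Adj u w := by
  have hedge : G.edgeSet = ∅ := (Set.ncard_eq_zero G.edgeSet.toFinite).mp h0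
  intro u w h
  have := (G.mem_edgeSet).mpr h
  rw [hedge] at this
  exact this

private theorem nosal_sSup_spec_zero (h0 : G.edgeSet.ncard = 0) :
    sSup (spectrum ℝ (G.adjMatrix ℝ)) = 0 := by
  have hM0 : G.adjMatrix ℝ = 0 := by
    ext u w; simp [adjMatrix_apply, nosal_adj_false G h0 u w]
  rw [hM0]
  cases isEmpty_or_nonempty V with
  | inl h =>
    have : spectrum ℝ (0 : Matrix V V ℝ) = ∅ := by
      ext μ; simp [spectrum.mem_iff, isUnit_of_subsingleton]
    rw [this, Real.sSup_empty]
  | inr h =>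
    rw [spectrum.zero_eq, csSup_singleton]

end NosalHelpers2

/-- Nosal's inequality for bipartite graphs: `ρ(G) ≤ √e(G)`, with equality iff `G`
is a complete bipartite graph together with possibly some isolated vertices. -/
theorem stmt2 {V : Type*} [Fintype V] [DecidableEq V] (G : SimpleGraph V)
    (hbip : ∃ P : V → Bool, ∀ u v, G.Adj u v → P u ≠ P v) :
    specRad G ≤ Real.sqrt (G.edgeSet.ncard)
    ∧ (specRad G = Real.sqrt (G.edgeSet.ncard) ↔
        ∃ A B : Set V, Disjoint A B ∧
          ∀ u v, G.Adj u v ↔ ((u ∈ A ∧ v ∈ B) ∨ (u ∈ B ∧ v ∈ A))) := by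
  letI inst : DecidableRel G.Adj := fun a b => Classical.propDecidable _
  obtain ⟨P, hPb⟩ := hbip
  set p : V → Prop := fun u => P u = true with hp'
  haveI : DecidablePred p := fun u => by unfold p; infer_instance
  have hp : ∀ u v, G.Adj u v → (p u ↔ ¬ p v) := by
    intro u v h
    have := hPb u v h
    cases hu : P u <;> cases hw : P v <;> simp_all [p]
  have hrad := nosal_specRad_eq G
  set e : ℝ := (G.edgeSet.ncard : ℝ) with he'
  have he0 : 0 ≤ e := Nat.cast_nonneg _
  have hbound : ∀ μ ∈ spectrum ℝ (G.adjMatrix ℝ), μ ≤ Real.sqrt e := by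
    intro μ hμ
    obtain ⟨v, hv0, hv⟩ := (nosal_mem_spec_iff _ μ).mp hμ
    by_cases h0 : G.edgeSet.ncard = 0
    · have hM0 : G.adjMatrix ℝ = 0 := by
        ext u w; simp [adjMatrix_apply, nosal_adj_false G h0 u w]
      rw [hM0] at hv
      have hz : μ • v = 0 := by rw [← hv]; simp
      rcases smul_eq_zero.mp hz with h | h
      · rw [h]; exact Real.sqrt_nonneg _
      · exact absurd h hv0
    · have hepos : 0 < e := by
        rw [he']; exact_mod_cast Nat.pos_of_ne_zero h0
      have hkey := (nosal_key G p hp hepos hv0 hv).1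
      calc μ ≤ |μ| := le_abs_self μ
        _ = Real.sqrt (μ^2) := (Real.sqrt_sq_eq_abs μ).symm
        _ ≤ Real.sqrt e := Real.sqrt_le_sqrt hkey
  have hle : specRad G ≤ Real.sqrt e := by
    rw [hrad]
    rcases Set.eq_empty_or_nonempty (spectrum ℝ (G.adjMatrix ℝ)) with hsp | hsp
    · rw [hsp, Real.sSup_empty]; exact Real.sqrt_nonneg _
    · exact csSup_le hsp hbound
  refine ⟨hle, ?_, ?_⟩
  · -- equality → complete bipartite structure
    intro heq
    by_cases h0 : G.edgeSet.ncard = 0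
    · exact ⟨∅, ∅, disjoint_bot_left, fun u w => by
        simp [nosal_adj_false G h0 u w]⟩
    · have hepos : 0 < e := by
        rw [he']; exact_mod_cast Nat.pos_of_ne_zero h0
      have hsqrtpos : 0 < Real.sqrt e := Real.sqrt_pos.mpr hepos
      have hne : (spectrum ℝ (G.adjMatrix ℝ)).Nonempty := by
        by_contra h
        rw [Set.not_nonempty_iff_eq_empty] at h
        rw [hrad, h, Real.sSup_empty] at heq
        rw [← heq] at hsqrtpos
        exact lt_irrefl 0 hsqrtpos
      have hmem : sSup (spectrum ℝ (G.adjMatrix ℝ)) ∈ spectrum ℝ (G.adjMatrix ℝ) :=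
        hne.csSup_mem (Matrix.finite_spectrum _)
      obtain ⟨v, hv0, hv⟩ := (nosal_mem_spec_iff _ _).mp hmem
      have hμeq : sSup (spectrum ℝ (G.adjMatrix ℝ)) = Real.sqrt e := by rw [← hrad]; exact heq
      rw [hμeq] at hv
      obtain ⟨t, ht, hvw⟩ := (nosal_key G p hp hepos hv0 hv).2 ⟨Real.sq_sqrt he0, hsqrtpos⟩
      refine ⟨{u | p u ∧ v u ≠ 0}, {u | ¬ p u ∧ v u ≠ 0}, ?_, ?_⟩
      · rw [Set.disjoint_left]; rintro x ⟨h1, _⟩ ⟨h2, _⟩; exact h2 h1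
      · intro u w
        constructor
        · intro h
          by_cases hpu : p u
          · have hpw : ¬ p w := (hp u w h).mp hpu
            have h7 := hvw u (Finset.mem_filter.mpr ⟨Finset.mem_univ _, hpu⟩)
              w (Finset.mem_filter.mpr ⟨Finset.mem_univ _, hpw⟩)
            rw [show G.adjMatrix ℝ u w = 1 from by simp [adjMatrix_apply, h], mul_one] at h7
            have h1 : v u ≠ 0 := fun hz => by
              rw [hz, zero_mul] at h7; exact (ne_of_gt ht) h7.symm
            have h2 : v w ≠ 0 := fun hz => by
              rw [hz, mul_zero] at h7; exact (ne_of_gt ht) h7.symm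
            exact Or.inl ⟨⟨hpu, h1⟩, ⟨hpw, h2⟩⟩
          · have hpw : p w := (hp w u h.symm).mpr hpu
            have h7 := hvw w (Finset.mem_filter.mpr ⟨Finset.mem_univ _, hpw⟩)
              u (Finset.mem_filter.mpr ⟨Finset.mem_univ _, hpu⟩)
            rw [show G.adjMatrix ℝ w u = 1 from by simp [adjMatrix_apply, h.symm], mul_one] at h7
            have h1 : v w ≠ 0 := fun hz => by
              rw [hz, zero_mul] at h7; exact (ne_of_gt ht) h7.symm
            have h2 : v u ≠ 0 := fun hz => by
              rw [hz, mul_zero] at h7; exact (ne_of_gt ht) h7.symm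
            exact Or.inr ⟨⟨hpu, h2⟩, ⟨hpw, h1⟩⟩
        · rintro (⟨⟨hpu, hu0⟩, ⟨hpw, hw0⟩⟩ | ⟨⟨hpu, hu0⟩, ⟨hpw, hw0⟩⟩)
          · have h7 := hvw u (Finset.mem_filter.mpr ⟨Finset.mem_univ _, hpu⟩)
              w (Finset.mem_filter.mpr ⟨Finset.mem_univ _, hpw⟩)
            by_contra hadj
            rw [show G.adjMatrix ℝ u w = 0 from by simp [adjMatrix_apply, hadj],
              mul_zero] at h7
            exact (mul_ne_zero hu0 hw0) h7
          · have h7 := hvw w (Finset.mem_filter.mpr ⟨Finset.mem_univ _, hpw⟩)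
              u (Finset.mem_filter.mpr ⟨Finset.mem_univ _, hpu⟩)
            by_contra hadj
            rw [show G.adjMatrix ℝ w u = 0 from by
              rw [adjMatrix_apply, if_neg (fun hh => hadj (hh.symm))], mul_zero] at h7
            exact (mul_ne_zero hw0 hu0) h7
  · -- complete bipartite structure → equality
    rintro ⟨A, B, hdisj, hAdj⟩
    by_cases h0 : G.edgeSet.ncard = 0
    · rw [hrad, nosal_sSup_spec_zero G h0, he', h0]
      simp
    · haveI : DecidablePred (· ∈ A) := fun _ => Classical.propDecidable _
      haveI : DecidablePred (· ∈ B) := fun _ => Classical.propDecidable _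
      have hepos : 0 < e := by
        rw [he']; exact_mod_cast Nat.pos_of_ne_zero h0
      have hAB : ∀ u, u ∈ A → u ∉ B := fun u hu hw => Set.disjoint_left.mp hdisj hu hw
      have hBA : ∀ u, u ∈ B → u ∉ A := fun u hu hw => Set.disjoint_left.mp hdisj hw hu
      have hpA : ∀ u w, G.Adj u w → ((u ∈ A) ↔ ¬ (w ∈ A)) := by
        intro u w h
        rcases (hAdj u w).mp h with ⟨h1, h2⟩ | ⟨h1, h2⟩
        · exact iff_of_true h1 (hBA w h2)
        · exact iff_of_false (hAB u · h1) (not_not_intro h2)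
      set aN := (univ.filter (· ∈ A)).card with haN'
      set bN := (univ.filter (· ∈ B)).card with hbN'
      have hcross := nosal_cross_sum G (· ∈ A) hpA
      have hBsubF : ∀ x, x ∈ B → ¬ x ∈ A := hBA
      have hinner : ∀ u ∈ univ.filter (· ∈ A),
          ∑ w ∈ univ.filter (fun x => ¬ x ∈ A), G.adjMatrix ℝ u w = (bN : ℝ) := by
        intro u hu
        have huA := (Finset.mem_filter.mp hu).2
        have hcong : ∀ w ∈ univ.filter (fun x => ¬ x ∈ A),
            G.adjMatrix ℝ u w = if w ∈ B then 1 else 0 := by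
          intro w hw
          rw [adjMatrix_apply]
          by_cases hwB : w ∈ B
          · rw [if_pos hwB, if_pos ((hAdj u w).mpr (Or.inl ⟨huA, hwB⟩))]
          · rw [if_neg hwB, if_neg]
            intro hadj
            rcases (hAdj u w).mp hadj with ⟨_, h2⟩ | ⟨h1, _⟩
            · exact hwB h2
            · exact hAB u huA h1
        have hfe : (univ.filter (fun x => ¬ x ∈ A)).filter (fun w => w ∈ B)
            = univ.filter (· ∈ B) := by
          ext x
          simp only [Finset.filter_filter, Finset.mem_filter, Finset.mem_univ, true_and]
          exact ⟨And.right, fun hB => ⟨hBA x hB, hB⟩⟩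
        rw [Finset.sum_congr rfl hcong, Finset.sum_boole, hfe]
      have heab : e = (aN : ℝ) * bN := by
        rw [he', ← hcross, Finset.sum_congr rfl hinner, Finset.sum_const, nsmul_eq_mul]
      have haNne : (aN : ℝ) ≠ 0 := by
        intro h; rw [h, zero_mul] at heab; exact (ne_of_gt hepos) heab
      have hbNne : (bN : ℝ) ≠ 0 := by
        intro h; rw [h, mul_zero] at heab; exact (ne_of_gt hepos) heab
      have hbNpos : 0 < (bN : ℝ) := lt_of_le_of_ne (Nat.cast_nonneg _) (Ne.symm hbNne)
      set y : V → ℝ := fun u => if u ∈ A then Real.sqrt bN else if u ∈ B then Real.sqrt aN else 0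
        with hy'
      have hyA : ∀ u, u ∈ A → y u = Real.sqrt bN := by
        intro u hu; rw [hy']; simp only; rw [if_pos hu]
      have hyB : ∀ u, u ∈ B → y u = Real.sqrt aN := by
        intro u hu; rw [hy']; simp only; rw [if_neg (hBA u hu), if_pos hu]
      have hyO : ∀ u, u ∉ A → u ∉ B → y u = 0 := by
        intro u hu1 hu2; rw [hy']; simp only; rw [if_neg hu1, if_neg hu2]
      have hveq : G.adjMatrix ℝ *ᵥ y = Real.sqrt e • y := by
        funext u
        rw [adjMatrix_mulVec_apply, Pi.smul_apply, smul_eq_mul]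
        by_cases hu : u ∈ A
        · have hnb : G.neighborFinset u = univ.filter (· ∈ B) := by
            ext x; rw [mem_neighborFinset, Finset.mem_filter]
            constructor
            · intro hadj
              rcases (hAdj u x).mp hadj with ⟨_, h2⟩ | ⟨h1, _⟩
              · exact ⟨Finset.mem_univ _, h2⟩
              · exact absurd h1 (hAB u hu)
            · rintro ⟨_, hx⟩; exact (hAdj u x).mpr (Or.inl ⟨hu, hx⟩)
          have hc : ∀ x ∈ univ.filter (· ∈ B), y x = Real.sqrt aN := by
            intro x hx; exact hyB x (Finset.mem_filter.mp hx).2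
          rw [hnb, Finset.sum_congr rfl hc, Finset.sum_const, nsmul_eq_mul, hyA u hu, heab,
            Real.sqrt_mul (Nat.cast_nonneg _),
            show Real.sqrt aN * Real.sqrt bN * Real.sqrt bN
              = Real.sqrt aN * (Real.sqrt bN * Real.sqrt bN) from by ring,
            Real.mul_self_sqrt (Nat.cast_nonneg _)]
          ring
        · by_cases hu2 : u ∈ B
          · have hnb : G.neighborFinset u = univ.filter (· ∈ A) := by
              ext x; rw [mem_neighborFinset, Finset.mem_filter]
              constructor
              · intro hadj
                rcases (hAdj u x).mp hadj with ⟨h1, _⟩ | ⟨_, h2⟩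
                · exact absurd h1 hu
                · exact ⟨Finset.mem_univ _, h2⟩
              · rintro ⟨_, hx⟩; exact (hAdj u x).mpr (Or.inr ⟨hu2, hx⟩)
            have hc : ∀ x ∈ univ.filter (· ∈ A), y x = Real.sqrt bN := by
              intro x hx; exact hyA x (Finset.mem_filter.mp hx).2
            rw [hnb, Finset.sum_congr rfl hc, Finset.sum_const, nsmul_eq_mul, hyB u hu2, heab,
              Real.sqrt_mul (Nat.cast_nonneg _),
              show Real.sqrt aN * Real.sqrt bN * Real.sqrt aN
                = Real.sqrt bN * (Real.sqrt aN * Real.sqrt aN) from by ring,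
              Real.mul_self_sqrt (Nat.cast_nonneg _)]
            ring
          · have hnb : G.neighborFinset u = ∅ := by
              ext x; rw [mem_neighborFinset]
              simp only [Finset.notMem_empty, iff_false]
              intro hadj
              rcases (hAdj u x).mp hadj with ⟨h1, _⟩ | ⟨h1, _⟩
              · exact hu h1
              · exact hu2 h1
            rw [hnb, Finset.sum_empty, hyO u hu hu2]
            ring
      have hyne : y ≠ 0 := by
        have haNnat : aN ≠ 0 := fun h => haNne (by rw [h]; norm_num)
        obtain ⟨x, hx⟩ := Finset.card_pos.mp (Nat.pos_of_ne_zero haNnat)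
        have hxA := (Finset.mem_filter.mp hx).2
        intro hzero
        have hx0 : y x = 0 := congrFun hzero x
        rw [hyA x hxA] at hx0
        exact (ne_of_gt (Real.sqrt_pos.mpr hbNpos)) hx0
      have hmem : Real.sqrt e ∈ spectrum ℝ (G.adjMatrix ℝ) :=
        (nosal_mem_spec_iff _ _).mpr ⟨y, hyne, hveq⟩
      have hge : Real.sqrt e ≤ specRad G := by
        rw [hrad]; exact le_csSup (Matrix.finite_spectrum _).bddAbove hmem
      exact le_antisymm hle hge
end

section
/- Let x, y, a be positive integers with x > y ≥ a+1. Then ρ(K_{x,y} \ E(K_{1,y−a+1})) > ρ(K_{x,y} \ E(K_{x−a+1,1})). -/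
/-- `K_{x,y}` minus the edges between the first `s` vertices of the `x`-side and
the first `r` vertices of the `y`-side. -/
def KBipMinus (x y s r : ℕ) : SimpleGraph (Fin x ⊕ Fin y) where
  Adj u v :=
    match u, v with
    | .inl i, .inr j => ¬(i.val < s ∧ j.val < r)
    | .inr j, .inl i => ¬(i.val < s ∧ j.val < r)
    | _, _ => False
  symm := by constructor; rintro (i | i) (j | j) h <;> simp at h ⊢ <;> exact h
  loopless := by constructor; rintro (i | i) h <;> simp at h

open Module.End in
lemma mem_spectrum_iff_eigen {n : Type*} [Fintype n] [DecidableEq n] (A : Matrix n n ℝ) (μ : ℝ) :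
    μ ∈ spectrum ℝ A ↔ ∃ v : n → ℝ, v ≠ 0 ∧ A.mulVec v = μ • v := by
  rw [← AlgEquiv.spectrum_eq (Matrix.toLinAlgEquiv' (R := ℝ) (n := n)),
    ← hasEigenvalue_iff_mem_spectrum, hasEigenvalue_iff, Submodule.ne_bot_iff]
  constructor
  · rintro ⟨v, hv, hv0⟩
    rw [mem_eigenspace_iff] at hv
    exact ⟨v, hv0, by rw [← hv]; rfl⟩
  · rintro ⟨v, hv0, hv⟩
    exact ⟨v, by rw [mem_eigenspace_iff]; exact hv, hv0⟩

open Finset in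
lemma spec_le_of_dom {n : Type*} [Fintype n] [DecidableEq n] (A : Matrix n n ℝ)
    (hsymm : ∀ i j, A i j = A j i) (hnn : ∀ i j, 0 ≤ A i j)
    (w : n → ℝ) (hw : ∀ i, 0 < w i) (lam : ℝ) (hdom : ∀ i, A.mulVec w i ≤ lam * w i)
    {μ : ℝ} (hμ : μ ∈ spectrum ℝ A) : μ ≤ lam := by
  obtain ⟨v, hv0, hv⟩ := (mem_spectrum_iff_eigen A μ).1 hμ
  set u : n → ℝ := fun i => |v i| with hu
  have key : ∀ i, |μ| * u i ≤ A.mulVec u i := by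
    intro i
    have h1 : |μ| * u i = |(A.mulVec v) i| := by
      rw [hv]; simp [hu, abs_mul]
    rw [h1, Matrix.mulVec, dotProduct]
    refine le_trans (Finset.abs_sum_le_sum_abs _ _) (Finset.sum_le_sum fun j _ => ?_)
    rw [abs_mul, abs_of_nonneg (hnn i j)]
  have hS : (0:ℝ) < ∑ i, w i * u i := by
    obtain ⟨i0, hi0⟩ := Function.ne_iff.1 hv0
    refine lt_of_lt_of_le (b := w i0 * u i0) ?_ ?_
    · exact mul_pos (hw i0) (abs_pos.2 hi0)
    · exact Finset.single_le_sum (fun i _ => mul_nonneg (hw i).le (abs_nonneg _)) (mem_univ i0)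
  have chain : |μ| * (∑ i, w i * u i) ≤ lam * (∑ i, w i * u i) := by
    calc |μ| * (∑ i, w i * u i) = ∑ i, w i * (|μ| * u i) := by
          rw [Finset.mul_sum]; exact Finset.sum_congr rfl fun i _ => by ring
      _ ≤ ∑ i, w i * (A.mulVec u i) :=
          Finset.sum_le_sum fun i _ => mul_le_mul_of_nonneg_left (key i) (hw i).le
      _ = ∑ j, (A.mulVec w) j * u j := by
          simp only [Matrix.mulVec, dotProduct, Finset.mul_sum, Finset.sum_mul]
          rw [Finset.sum_comm]
          exact Finset.sum_congr rfl fun j _ => Finset.sum_congr rfl fun i _ => by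
            rw [hsymm i j]; ring
      _ ≤ ∑ j, lam * (w j * u j) :=
          Finset.sum_le_sum fun j _ => by
            have := mul_le_mul_of_nonneg_right (hdom j) (abs_nonneg (v j))
            calc (A.mulVec w) j * u j ≤ lam * w j * u j := this
              _ = lam * (w j * u j) := by ring
      _ = lam * (∑ i, w i * u i) := by rw [← Finset.mul_sum]
  have := le_of_mul_le_mul_right (by simpa [mul_comm] using chain) hS
  exact le_trans (le_abs_self μ) this

lemma ite_count (n k : ℕ) (hk : k ≤ n) (c1 c2 : ℝ) :
    ∑ j : Fin n, (if (j:ℕ) < k then c1 else c2) = k * c1 + (n - k : ℕ) * c2 := by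
  rw [Fin.sum_univ_eq_sum_range (fun j => if j < k then c1 else c2) n]
  have hsub : Finset.range k ⊆ Finset.range n := Finset.range_subset_range.2 hk
  rw [← Finset.sum_sdiff hsub]
  have h1 : ∑ j ∈ Finset.range k, (if j < k then c1 else c2) = k * c1 := by
    rw [Finset.sum_congr rfl fun j hj => if_pos (Finset.mem_range.1 hj)]
    simp [mul_comm]
  have h2 : ∑ j ∈ Finset.range n \ Finset.range k, (if j < k then c1 else c2)
      = (n - k : ℕ) * c2 := by
    rw [Finset.sum_congr rfl fun j hj => if_neg (by
      simp only [Finset.mem_sdiff, Finset.mem_range] at hj; omega)]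
    rw [Finset.sum_const, Finset.card_sdiff_of_subset hsub, Finset.card_range, Finset.card_range]
    simp [mul_comm]
  rw [h1, h2]; ring

lemma mulVec_KBip (x y s r : ℕ) (hs : s ≤ x) (hr : r ≤ y) (α β γ δ : ℝ)
    [inst : DecidableRel (KBipMinus x y s r).Adj] (u : Fin x ⊕ Fin y) :
    ((KBipMinus x y s r).adjMatrix ℝ).mulVec
      (Sum.elim (fun i : Fin x => if (i:ℕ) < s then α else β)
                (fun j : Fin y => if (j:ℕ) < r then γ else δ)) u
      = Sum.elim (fun i : Fin x => if (i:ℕ) < s then (y - r : ℕ) * δ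
                                   else (r:ℕ) * γ + (y - r : ℕ) * δ)
                 (fun j : Fin y => if (j:ℕ) < r then (x - s : ℕ) * β
                                   else (s:ℕ) * α + (x - s : ℕ) * β) u := by
  obtain (i | j) := u
  · simp only [Matrix.mulVec, dotProduct, Fintype.sum_sum_type, Sum.elim_inl,
      Sum.elim_inr, SimpleGraph.adjMatrix_apply]
    have hAdj1 : ∀ i' : Fin x, ¬ (KBipMinus x y s r).Adj (Sum.inl i) (Sum.inl i') :=
      fun i' h => h
    have h0 : (∑ i' : Fin x, (if (KBipMinus x y s r).Adj (Sum.inl i) (Sum.inl i') then (1:ℝ)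
        else 0) * (if (i':ℕ) < s then α else β)) = 0 := by
      refine Finset.sum_eq_zero fun i' _ => ?_
      rw [if_neg (hAdj1 i')]; ring
    rw [h0, zero_add]
    have hAdj2 : ∀ j : Fin y, (KBipMinus x y s r).Adj (Sum.inl i) (Sum.inr j)
        ↔ ¬((i:ℕ) < s ∧ (j:ℕ) < r) := fun j => Iff.rfl
    by_cases hi : (i:ℕ) < s
    · have : ∀ j : Fin y, (if (KBipMinus x y s r).Adj (Sum.inl i) (Sum.inr j) then (1:ℝ)
          else 0) * (if (j:ℕ) < r then γ else δ) = (if (j:ℕ) < r then 0 else δ) := by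
        intro j
        by_cases hj : (j:ℕ) < r <;> simp [hAdj2, hi, hj]
      rw [Finset.sum_congr rfl fun j _ => this j, ite_count y r hr 0 δ, if_pos hi]
      ring
    · have : ∀ j : Fin y, (if (KBipMinus x y s r).Adj (Sum.inl i) (Sum.inr j) then (1:ℝ)
          else 0) * (if (j:ℕ) < r then γ else δ) = (if (j:ℕ) < r then γ else δ) := by
        intro j
        by_cases hj : (j:ℕ) < r <;> simp [hAdj2, hi, hj]
      rw [Finset.sum_congr rfl fun j _ => this j, ite_count y r hr γ δ, if_neg hi]
  · simp only [Matrix.mulVec, dotProduct, Fintype.sum_sum_type, Sum.elim_inl,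
      Sum.elim_inr, SimpleGraph.adjMatrix_apply]
    have h0 : (∑ j' : Fin y, (if (KBipMinus x y s r).Adj (Sum.inr j) (Sum.inr j') then (1:ℝ)
        else 0) * (if (j':ℕ) < r then γ else δ)) = 0 := by
      refine Finset.sum_eq_zero fun j' _ => ?_
      rw [if_neg (show ¬ (KBipMinus x y s r).Adj (Sum.inr j) (Sum.inr j') from fun h => h)]; ring
    rw [h0, add_zero]
    have hAdj2 : ∀ i : Fin x, (KBipMinus x y s r).Adj (Sum.inr j) (Sum.inl i)
        ↔ ¬((i:ℕ) < s ∧ (j:ℕ) < r) := fun i => Iff.rfl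
    by_cases hj : (j:ℕ) < r
    · have : ∀ i : Fin x, (if (KBipMinus x y s r).Adj (Sum.inr j) (Sum.inl i) then (1:ℝ)
          else 0) * (if (i:ℕ) < s then α else β) = (if (i:ℕ) < s then 0 else β) := by
        intro i
        by_cases hi : (i:ℕ) < s <;> simp [hAdj2, hi, hj]
      rw [Finset.sum_congr rfl fun i _ => this i, ite_count x s hs 0 β, if_pos hj]
      ring
    · have : ∀ i : Fin x, (if (KBipMinus x y s r).Adj (Sum.inr j) (Sum.inl i) then (1:ℝ)
          else 0) * (if (i:ℕ) < s then α else β) = (if (i:ℕ) < s then α else β) := by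
        intro i
        by_cases hi : (i:ℕ) < s <;> simp [hAdj2, hi, hj]
      rw [Finset.sum_congr rfl fun i _ => this i, ite_count x s hs α β, if_neg hj]

lemma adjM_symm {V : Type*} [Fintype V] (G : SimpleGraph V) [DecidableRel G.Adj] :
    ∀ i j, (G.adjMatrix ℝ) i j = (G.adjMatrix ℝ) j i := by
  intro i j
  simp only [SimpleGraph.adjMatrix_apply]
  by_cases h : G.Adj i j
  · rw [if_pos h, if_pos h.symm]
  · rw [if_neg h, if_neg (fun h' => h h'.symm)]

lemma adjM_nonneg {V : Type*} [Fintype V] (G : SimpleGraph V) [DecidableRel G.Adj] :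
    ∀ i j, (0:ℝ) ≤ (G.adjMatrix ℝ) i j := by
  intro i j
  simp only [SimpleGraph.adjMatrix_apply]
  split <;> norm_num

lemma specRad_eq {V : Type*} [Fintype V] [DecidableEq V] (G : SimpleGraph V)
    [inst : DecidableRel G.Adj] :
    specRad G = sSup (spectrum ℝ (G.adjMatrix ℝ)) := by
  unfold specRad
  refine congrArg sSup (congrArg (spectrum ℝ) ?_)
  ext i j
  by_cases h : G.Adj i j <;> simp [h]

set_option maxHeartbeats 1000000 in
/-- Lemma 3.1: for positive integers `x > y ≥ a + 1`,
`ρ(K_{x,y} \ E(K_{1,y-a+1})) > ρ(K_{x,y} \ E(K_{x-a+1,1}))`. -/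
theorem stmt5 (x y a : ℕ) (ha : 0 < a) (hya : a + 1 ≤ y) (hxy : y < x) :
    specRad (KBipMinus x y (x - a + 1) 1) < specRad (KBipMinus x y 1 (y - a + 1)) := by
  classical
  rw [specRad_eq, specRad_eq]
  have hax : a ≤ x := by omega
  have hay : a ≤ y := by omega
  obtain ⟨X, hXdef⟩ : ∃ X : ℝ, X = (x:ℝ) := ⟨_, rfl⟩
  obtain ⟨Y, hYdef⟩ : ∃ Y : ℝ, Y = (y:ℝ) := ⟨_, rfl⟩
  obtain ⟨A, hAdef⟩ : ∃ A : ℝ, A = (a:ℝ) := ⟨_, rfl⟩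
  have hA1 : (1:ℝ) ≤ A := by rw [hAdef]; exact_mod_cast ha
  have hYA : A + 1 ≤ Y := by rw [hAdef, hYdef]; exact_mod_cast hya
  have hXY : Y + 1 ≤ X := by rw [hXdef, hYdef]; exact_mod_cast hxy
  have hX0 : (0:ℝ) ≤ X := by linarith
  have hY0 : (0:ℝ) ≤ Y := by linarith
  have cxa : ((x - a + 1 : ℕ):ℝ) = X - A + 1 := by
    rw [Nat.cast_add, Nat.cast_sub hax, Nat.cast_one, hXdef, hAdef]
  have cya : ((y - a + 1 : ℕ):ℝ) = Y - A + 1 := by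
    rw [Nat.cast_add, Nat.cast_sub hay, Nat.cast_one, hYdef, hAdef]
  have ca1 : ((a - 1 : ℕ):ℝ) = A - 1 := by
    rw [Nat.cast_sub ha, Nat.cast_one, hAdef]
  have cy1 : ((y - 1 : ℕ):ℝ) = Y - 1 := by
    rw [Nat.cast_sub (by omega), Nat.cast_one, hYdef]
  have cx1 : ((x - 1 : ℕ):ℝ) = X - 1 := by
    rw [Nat.cast_sub (by omega), Nat.cast_one, hXdef]
  obtain ⟨t1, ht1def⟩ : ∃ t1 : ℝ, t1 = (X - A + 1) * (Y - 1) + (A - 1) * Y := ⟨_, rfl⟩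
  obtain ⟨d1, hd1def⟩ : ∃ d1 : ℝ, d1 = (A - 1) * (Y - 1) * (X - A + 1) := ⟨_, rfl⟩
  obtain ⟨t2, ht2def⟩ : ∃ t2 : ℝ, t2 = (A - 1) + Y * (X - 1) := ⟨_, rfl⟩
  obtain ⟨d2, hd2def⟩ : ∃ d2 : ℝ, d2 = (A - 1) * (X - 1) * (Y - A + 1) := ⟨_, rfl⟩
  have hD1nn : 0 ≤ t1^2 - 4*d1 := by
    have e : t1^2 - 4*d1
        = ((X - A + 1)*(Y - 1) - (A - 1)*Y)^2 + 4*((A-1)*((X-A+1)*(Y-1)^2)) := by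
      rw [ht1def, hd1def]; ring
    rw [e]
    have h1 : (0:ℝ) ≤ (A-1) := by linarith
    have h2 : (0:ℝ) ≤ X - A + 1 := by linarith
    linarith only [sq_nonneg ((X - A + 1)*(Y - 1) - (A - 1)*Y),
      mul_nonneg h1 (mul_nonneg h2 (sq_nonneg (Y-1)))]
  have hD2nn : 0 ≤ t2^2 - 4*d2 := by
    have e : t2^2 - 4*d2 = ((A-1) - Y*(X-1))^2 + 4*((A-1)^2*(X-1)) := by
      rw [ht2def, hd2def]; ring
    rw [e]
    linarith only [sq_nonneg ((A-1) - Y*(X-1)),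
      mul_nonneg (sq_nonneg (A-1)) (by linarith : (0:ℝ) ≤ X-1)]
  obtain ⟨s1, hs1def⟩ : ∃ s1 : ℝ, s1 = (t1 + Real.sqrt (t1^2 - 4*d1))/2 := ⟨_, rfl⟩
  obtain ⟨s2, hs2def⟩ : ∃ s2 : ℝ, s2 = (t2 + Real.sqrt (t2^2 - 4*d2))/2 := ⟨_, rfl⟩
  have hr1 := Real.sq_sqrt hD1nn
  have hr2 := Real.sq_sqrt hD2nn
  have hr1nn := Real.sqrt_nonneg (t1^2 - 4*d1)
  have hr2nn := Real.sqrt_nonneg (t2^2 - 4*d2)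
  have hq1 : s1^2 = t1*s1 - d1 := by rw [hs1def]; linear_combination hr1/4
  have hq2 : s2^2 = t2*s2 - d2 := by rw [hs2def]; linear_combination hr2/4
  have hXYmul : X ≤ X*(Y-1) := by
    linarith only [mul_nonneg hX0 (by linarith : (0:ℝ) ≤ Y - 2)]
  have hYXmul : Y ≤ Y*(X-1) := by
    linarith only [mul_nonneg hY0 (by linarith : (0:ℝ) ≤ X - 2)]
  have ht1a : 2*(A-1) < t1 := by
    rw [ht1def]; linarith only [hXYmul, hXY, hYA, hA1]
  have ht2a : 2*(A-1) < t2 := by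
    rw [ht2def]; linarith only [hYXmul, hYA, hA1]
  have ht1pos : 0 < t1 := by linarith
  have ht2pos : 0 < t2 := by linarith
  have hs1pos : 0 < s1 := by rw [hs1def]; linarith only [ht1pos, hr1nn]
  have hs2pos : 0 < s2 := by rw [hs2def]; linarith only [ht2pos, hr2nn]
  have hs1a : A - 1 < s1 := by rw [hs1def]; linarith only [ht1a, hr1nn]
  have hs2a : A - 1 < s2 := by rw [hs2def]; linarith only [ht2a, hr2nn]
  have hden1 : s1 - (A-1) ≠ 0 := by
    intro h; rw [sub_eq_zero] at h; linarith
  have hden2 : s2 - (A-1) ≠ 0 := by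
    intro h; rw [sub_eq_zero] at h; linarith
  have hAA : 0 ≤ (A-1)*(A-2) := by
    rcases Nat.lt_or_ge a 2 with h2 | h2
    · have ha1 : a = 1 := by omega
      rw [hAdef, ha1]; norm_num
    · have hA2 : (2:ℝ) ≤ A := by rw [hAdef]; exact_mod_cast h2
      exact mul_nonneg (by linarith) (by linarith)
  have hd12 : d2 ≤ d1 := by
    have e : d1 - d2 = (A-1)*(A-2)*(X-Y) := by rw [hd1def, hd2def]; ring
    have h := mul_nonneg hAA (by linarith : (0:ℝ) ≤ X - Y)
    linarith only [e, h]
  have ht12 : t1 < t2 := by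
    have e : t2 - t1 = X - Y := by rw [ht1def, ht2def]; ring
    linarith
  have hDD : t1^2 - 4*d1 ≤ t2^2 - 4*d2 := by
    have h := mul_nonneg (by linarith : (0:ℝ) ≤ t2 - t1) (by linarith : (0:ℝ) ≤ t2 + t1)
    linarith only [h, hd12]
  have hs12 : s1 < s2 := by
    rw [hs1def, hs2def]
    have h := Real.sqrt_le_sqrt hDD
    linarith only [ht12, h]
  obtain ⟨lam1, hlam1def⟩ : ∃ lam1 : ℝ, lam1 = Real.sqrt s1 := ⟨_, rfl⟩
  obtain ⟨lam2, hlam2def⟩ : ∃ lam2 : ℝ, lam2 = Real.sqrt s2 := ⟨_, rfl⟩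
  have hlam1pos : 0 < lam1 := by rw [hlam1def]; exact Real.sqrt_pos.2 hs1pos
  have hlam2pos : 0 < lam2 := by rw [hlam2def]; exact Real.sqrt_pos.2 hs2pos
  have hlam1sq : lam1^2 = s1 := by rw [hlam1def]; exact Real.sq_sqrt hs1pos.le
  have hlam2sq : lam2^2 = s2 := by rw [hlam2def]; exact Real.sq_sqrt hs2pos.le
  have hlam12 : lam1 < lam2 := by rw [hlam1def, hlam2def]; exact Real.sqrt_lt_sqrt hs1pos.le hs12
  obtain ⟨lamm, hlammdef⟩ : ∃ lamm : ℝ, lamm = (lam1 + lam2)/2 := ⟨_, rfl⟩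
  have hm1 : lam1 < lamm := by rw [hlammdef]; linarith
  have hm2 : lamm < lam2 := by rw [hlammdef]; linarith
  have hmpos : 0 < lamm := by linarith
  -- Part 1 : upper bound for G1
  obtain ⟨β1, hβ1def⟩ : ∃ β1 : ℝ, β1 = (Y-1)*s1/(s1-(A-1)) := ⟨_, rfl⟩
  have hβ1pos : 0 < β1 := by
    rw [hβ1def]
    exact div_pos (mul_pos (by linarith) hs1pos) (by linarith)
  have keyβ : β1 * (s1 - (A-1)) = (Y-1)*s1 := by
    rw [hβ1def]; field_simp
  have quad1 : (X-A+1)*(Y-1) + (A-1)*β1 = s1 := by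
    have h0 : ((X-A+1)*(Y-1) + (A-1)*β1 - s1) * (s1-(A-1)) = 0 := by
      linear_combination (A-1)*keyβ - hq1 - s1*ht1def + hd1def
    rcases mul_eq_zero.1 h0 with h | h
    · rw [sub_eq_zero] at h; linarith [h]
    · exact absurd h hden1
  obtain ⟨wγ, hwγdef⟩ : ∃ wγ : ℝ, wγ = (A-1)*β1 + (lamm-lam1)*(β1*lam1) := ⟨_, rfl⟩
  have hwγpos : 0 < wγ := by
    rw [hwγdef]
    have h1 : 0 ≤ (A-1)*β1 := mul_nonneg (by linarith) hβ1pos.le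
    have h2 : 0 < (lamm-lam1)*(β1*lam1) :=
      mul_pos (by linarith) (mul_pos hβ1pos hlam1pos)
    linarith only [h1, h2]
  obtain ⟨w1, hw1def⟩ : ∃ w1 : Fin x ⊕ Fin y → ℝ, w1 =
    Sum.elim (fun i : Fin x => if (i:ℕ) < (x - a + 1) then (Y-1)*lam1 else β1*lam1)
             (fun j : Fin y => if (j:ℕ) < 1 then wγ else s1) := ⟨_, rfl⟩
  have hw1pos : ∀ u, 0 < w1 u := by
    rintro (i | j) <;> rw [hw1def] <;> simp only [Sum.elim_inl, Sum.elim_inr] <;> split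
    · exact mul_pos (by linarith) hlam1pos
    · exact mul_pos hβ1pos hlam1pos
    · exact hwγpos
    · exact hs1pos
  have hdom1 : ∀ u, (((KBipMinus x y (x-a+1) 1).adjMatrix ℝ).mulVec w1) u ≤ lamm * w1 u := by
    intro u
    rw [hw1def, mulVec_KBip x y (x-a+1) 1 (by omega) (by omega) _ _ _ _ u]
    obtain (i | j) := u
    · simp only [Sum.elim_inl]
      by_cases hi : (i:ℕ) < x - a + 1
      · rw [if_pos hi, if_pos hi, cy1]
        have e : (Y-1)*s1 = lam1*((Y-1)*lam1) := by linear_combination -(Y-1)*hlam1sq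
        have h := mul_le_mul_of_nonneg_right hm1.le
          (mul_nonneg (by linarith : (0:ℝ) ≤ Y-1) hlam1pos.le)
        linarith only [e, h]
      · rw [if_neg hi, if_neg hi, cy1, Nat.cast_one, one_mul]
        have e : wγ + (Y-1)*s1 = lamm*(β1*lam1) := by
          rw [hwγdef]
          linear_combination -keyβ - β1*hlam1sq
        linarith only [e]
    · simp only [Sum.elim_inr]
      by_cases hj : (j:ℕ) < 1
      · rw [if_pos hj, if_pos hj, show x - (x - a + 1) = a - 1 from by omega, ca1]
        have h1 : 0 ≤ (A-1)*β1 := mul_nonneg (by linarith) hβ1pos.le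
        have h2 := mul_le_mul_of_nonneg_left hm1.le h1
        have h3 : 0 ≤ lamm*((lamm-lam1)*(β1*lam1)) :=
          mul_nonneg hmpos.le
            (mul_nonneg (by linarith) (mul_nonneg hβ1pos.le hlam1pos.le))
        rw [hwγdef]
        linarith only [h2, h3]
      · rw [if_neg hj, if_neg hj, show x - (x - a + 1) = a - 1 from by omega, ca1, cxa]
        have e4 : (X-A+1)*((Y-1)*lam1) + (A-1)*(β1*lam1) = lam1*s1 := by
          linear_combination lam1*quad1
        have h := mul_le_mul_of_nonneg_right hm1.le hs1pos.le
        linarith only [e4, h]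
  -- Part 2 : eigenvector for G2
  obtain ⟨δ2, hδ2def⟩ : ∃ δ2 : ℝ, δ2 = (X-1)*s2/(s2-(A-1)) := ⟨_, rfl⟩
  have keyδ : δ2 * (s2 - (A-1)) = (X-1)*s2 := by
    rw [hδ2def]; field_simp
  have quad2 : (Y-A+1)*(X-1) + (A-1)*δ2 = s2 := by
    have h0 : ((Y-A+1)*(X-1) + (A-1)*δ2 - s2) * (s2-(A-1)) = 0 := by
      linear_combination (A-1)*keyδ - hq2 - s2*ht2def + hd2def
    rcases mul_eq_zero.1 h0 with h | h
    · rw [sub_eq_zero] at h; linarith [h]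
    · exact absurd h hden2
  obtain ⟨v2, hv2def⟩ : ∃ v2 : Fin x ⊕ Fin y → ℝ, v2 =
    Sum.elim (fun i : Fin x => if (i:ℕ) < 1 then (A-1)*δ2 else s2)
             (fun j : Fin y => if (j:ℕ) < (y - a + 1) then (X-1)*lam2 else δ2*lam2) := ⟨_, rfl⟩
  have hv2ne : v2 ≠ 0 := by
    intro h
    have h1 := congrFun h (Sum.inl ⟨1, by omega⟩)
    rw [hv2def] at h1
    simp only [Sum.elim_inl, Pi.zero_apply] at h1
    rw [if_neg (by norm_num)] at h1
    exact absurd h1 (ne_of_gt hs2pos)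
  have hv2eig : (((KBipMinus x y 1 (y-a+1)).adjMatrix ℝ).mulVec v2) = lam2 • v2 := by
    funext u
    rw [hv2def, mulVec_KBip x y 1 (y-a+1) (by omega) (by omega) _ _ _ _ u]
    obtain (i | j) := u
    · simp only [Sum.elim_inl, Pi.smul_apply, smul_eq_mul]
      by_cases hi : (i:ℕ) < 1
      · rw [if_pos hi, if_pos hi, show y - (y - a + 1) = a - 1 from by omega, ca1]
        ring
      · rw [if_neg hi, if_neg hi, show y - (y - a + 1) = a - 1 from by omega, ca1, cya]
        linear_combination lam2*quad2
    · simp only [Sum.elim_inr, Pi.smul_apply, smul_eq_mul]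
      by_cases hj : (j:ℕ) < y - a + 1
      · rw [if_pos hj, if_pos hj, cx1]
        linear_combination -(X-1)*hlam2sq
      · rw [if_neg hj, if_neg hj, cx1, Nat.cast_one, one_mul]
        linear_combination -keyδ - δ2*hlam2sq
  have hmem : lam2 ∈ spectrum ℝ ((KBipMinus x y 1 (y-a+1)).adjMatrix ℝ) :=
    (mem_spectrum_iff_eigen _ _).2 ⟨v2, hv2ne, hv2eig⟩
  obtain ⟨wones, hwodef⟩ : ∃ w : Fin x ⊕ Fin y → ℝ, w =
    Sum.elim (fun i : Fin x => if (i:ℕ) < 1 then (1:ℝ) else 1)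
             (fun j : Fin y => if (j:ℕ) < (y - a + 1) then (1:ℝ) else 1) := ⟨_, rfl⟩
  have hwopos : ∀ u, 0 < wones u := by
    rintro (i | j) <;> rw [hwodef] <;> simp only [Sum.elim_inl, Sum.elim_inr] <;>
      split <;> norm_num
  have hwodom : ∀ u, (((KBipMinus x y 1 (y-a+1)).adjMatrix ℝ).mulVec wones) u
      ≤ (X+Y) * wones u := by
    intro u
    rw [hwodef, mulVec_KBip x y 1 (y-a+1) (by omega) (by omega) _ _ _ _ u]
    obtain (i | j) := u
    · simp only [Sum.elim_inl]
      by_cases hi : (i:ℕ) < 1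
      · rw [if_pos hi, if_pos hi, show y - (y - a + 1) = a - 1 from by omega, ca1]
        linarith
      · rw [if_neg hi, if_neg hi, show y - (y - a + 1) = a - 1 from by omega, ca1, cya]
        linarith
    · simp only [Sum.elim_inr]
      by_cases hj : (j:ℕ) < y - a + 1
      · rw [if_pos hj, if_pos hj, cx1]
        linarith
      · rw [if_neg hj, if_neg hj, cx1, Nat.cast_one]
        linarith
  have hbdd : BddAbove (spectrum ℝ ((KBipMinus x y 1 (y-a+1)).adjMatrix ℝ)) := by
    refine ⟨X+Y, fun μ hμ => ?_⟩
    exact spec_le_of_dom _ (adjM_symm _) (adjM_nonneg _) wones hwopos (X+Y) hwodom hμ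
  refine lt_of_le_of_lt (Real.sSup_le (fun μ hμ => ?_) hmpos.le)
    (lt_of_lt_of_le hm2 (le_csSup hbdd hmem))
  exact spec_le_of_dom _ (adjM_symm _) (adjM_nonneg _) w1 hw1pos lamm hdom1 hμ
end

section
/- Let x, y, δ, s be positive integers with y > x ≥ s+δ and s ≥ δ+1. Define g(λ) = (y−δ−s)λ² + δ²(δ+s−x−y) + δ(s² − sx − sy + xy) + s³ − s²x − s²y + sxy. Then for all real λ ≥ √((x−δ)y), g(λ) ≥ s(δ+y)(y−δ−s) > 0. -/
/-- the polynomial `g` from the proof of Lemma 3.4 -/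
noncomputable def gpoly (x y δ s : ℕ) (l : ℝ) : ℝ :=
  ((y : ℝ) - δ - s) * l ^ 2 + (δ : ℝ) ^ 2 * ((δ : ℝ) + s - x - y)
    + (δ : ℝ) * ((s : ℝ) ^ 2 - s * x - s * y + x * y)
    + (s : ℝ) ^ 3 - (s : ℝ) ^ 2 * x - (s : ℝ) ^ 2 * y + s * x * y

theorem stmt7 (x y δ s : ℕ) (hδ : 0 < δ) (hs : δ + 1 ≤ s) (hx : s + δ ≤ x) (hy : x < y) :
    ∀ l : ℝ, Real.sqrt (((x : ℝ) - δ) * y) ≤ l →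
      (s : ℝ) * ((δ : ℝ) + y) * ((y : ℝ) - δ - s) ≤ gpoly x y δ s l
        ∧ 0 < (s : ℝ) * ((δ : ℝ) + y) * ((y : ℝ) - δ - s) := by
  intro l hl
  have hδ' : (1 : ℝ) ≤ (δ : ℝ) := by exact_mod_cast hδ
  have hs' : (δ : ℝ) + 1 ≤ (s : ℝ) := by exact_mod_cast hs
  have hx' : (s : ℝ) + δ ≤ (x : ℝ) := by exact_mod_cast hx
  have hy' : (x : ℝ) < (y : ℝ) := by exact_mod_cast hy
  have hnn : (0 : ℝ) ≤ ((x : ℝ) - δ) * y := by nlinarith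
  have hsq : ((x : ℝ) - δ) * y ≤ l ^ 2 := by
    have := Real.sq_sqrt hnn
    nlinarith [Real.sqrt_nonneg (((x : ℝ) - δ) * y)]
  have h1 : (0:ℝ) < (y:ℝ) - δ - s := by linarith
  have key : gpoly x y δ s l - (s : ℝ) * ((δ : ℝ) + y) * ((y : ℝ) - δ - s)
      = ((y:ℝ) - δ - s) * (l ^ 2 - ((x:ℝ) - δ) * y)
        + ((x:ℝ) - δ - s) * ((y:ℝ)^2 - (δ:ℝ)^2 - δ * s - (s:ℝ)^2) := by
    unfold gpoly; ring
  have h2 : (0:ℝ) ≤ (x:ℝ) - δ - s := by linarith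
  have h3 : (0:ℝ) ≤ (y:ℝ)^2 - (δ:ℝ)^2 - δ * s - (s:ℝ)^2 := by nlinarith
  constructor
  · nlinarith [mul_nonneg h2 h3, mul_nonneg h1.le (sub_nonneg.2 hsq)]
  · have : (0:ℝ) < (s:ℝ) * ((δ:ℝ) + y) := by nlinarith
    exact mul_pos this h1
end

section
/- An (X,Y)-bipartite graph G has an (a,b)-biregular factor if and only if a|X| = b|Y| and e_G(S, Y−T) + b|T| − a|S| ≥ 0 for all subsets S ⊆ X and T ⊆ Y. -/
open Sum

open Finset

lemma sum_filter_card {γ δ : Type*} [DecidableEq δ] (A : Finset γ) (g : γ → δ) (S : Finset δ) :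
    ∑ y ∈ S, (A.filter fun e => g e = y).card = (A.filter fun e => g e ∈ S).card := by
  classical
  simp only [Finset.card_filter]
  rw [Finset.sum_comm]
  exact Finset.sum_congr rfl fun e _ => Finset.sum_ite_eq _ _ _

section gadget

variable {m n : ℕ}

/-- degree of `x` on the left. -/
def deg1 (A : Finset (Fin m × Fin n)) (x : Fin m) : ℕ := (A.filter fun p => p.1 = x).card

/-- degree of `y` on the right. -/
def deg2 (A : Finset (Fin m × Fin n)) (y : Fin n) : ℕ := (A.filter fun p => p.2 = y).card

/-- left side of the gadget graph. -/
def side1 (b : ℕ) (A : Finset (Fin m × Fin n)) : Finset ((Fin m × Fin n) ⊕ (Fin n × ℕ)) :=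
  A.image inl ∪ Finset.univ.biUnion fun y => (Finset.range (deg2 A y - b)).image fun k => inr (y, k)

/-- right side of the gadget graph. -/
def side2 (a : ℕ) (A : Finset (Fin m × Fin n)) : Finset ((Fin m × Fin n) ⊕ (Fin m × ℕ)) :=
  A.image inl ∪ Finset.univ.biUnion fun x => (Finset.range (deg1 A x - a)).image fun k => inr (x, k)

/-- neighbourhoods in the gadget graph. -/
def nbr (a : ℕ) (A : Finset (Fin m × Fin n)) :
    ((Fin m × Fin n) ⊕ (Fin n × ℕ)) → Finset ((Fin m × Fin n) ⊕ (Fin m × ℕ))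
  | inl e => insert (inl e) ((Finset.range (deg1 A e.1 - a)).image fun k => inr (e.1, k))
  | inr (y, _) => (A.filter fun q => q.2 = y).image inl

lemma mem_side1 {b : ℕ} {A : Finset (Fin m × Fin n)} {v : (Fin m × Fin n) ⊕ (Fin n × ℕ)} :
    v ∈ side1 b A ↔ (∃ e ∈ A, v = inl e) ∨ ∃ y k, k < deg2 A y - b ∧ v = inr (y, k) := by
  simp only [side1, Finset.mem_union, Finset.mem_image, Finset.mem_biUnion, Finset.mem_univ,
    Finset.mem_range, true_and]
  constructor
  · rintro (⟨e, he, rfl⟩ | ⟨y, k, hk, rfl⟩)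
    · exact Or.inl ⟨e, he, rfl⟩
    · exact Or.inr ⟨y, k, hk, rfl⟩
  · rintro (⟨e, he, rfl⟩ | ⟨y, k, hk, rfl⟩)
    · exact Or.inl ⟨e, he, rfl⟩
    · exact Or.inr ⟨y, ⟨k, hk, rfl⟩⟩

lemma mem_side2 {a : ℕ} {A : Finset (Fin m × Fin n)} {w : (Fin m × Fin n) ⊕ (Fin m × ℕ)} :
    w ∈ side2 a A ↔ (∃ e ∈ A, w = inl e) ∨ ∃ x k, k < deg1 A x - a ∧ w = inr (x, k) := by
  simp only [side2, Finset.mem_union, Finset.mem_image, Finset.mem_biUnion, Finset.mem_univ,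
    Finset.mem_range, true_and]
  constructor
  · rintro (⟨e, he, rfl⟩ | ⟨x, k, hk, rfl⟩)
    · exact Or.inl ⟨e, he, rfl⟩
    · exact Or.inr ⟨x, k, hk, rfl⟩
  · rintro (⟨e, he, rfl⟩ | ⟨x, k, hk, rfl⟩)
    · exact Or.inl ⟨e, he, rfl⟩
    · exact Or.inr ⟨x, ⟨k, hk, rfl⟩⟩

lemma card_image_inr_range {γ δ : Type*} [DecidableEq γ] [DecidableEq δ] (N : ℕ) (c : δ) :
    ((Finset.range N).image fun k => (inr (c, k) : γ ⊕ (δ × ℕ))).card = N := by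
  rw [Finset.card_image_of_injective, Finset.card_range]
  intro i j h
  simpa using h

lemma card_side1 {b : ℕ} {A : Finset (Fin m × Fin n)} (hb : ∀ y, b ≤ deg2 A y) :
    (side1 b A).card + b * n = A.card + A.card := by
  classical
  rw [side1, Finset.card_union_of_disjoint, Finset.card_image_of_injective _ Sum.inl_injective,
    Finset.card_biUnion]
  · have h0 : ∑ y : Fin n, ((Finset.range (deg2 A y - b)).image fun k => (inr (y, k) : (Fin m × Fin n) ⊕ (Fin n × ℕ))).card = ∑ y : Fin n, (deg2 A y - b) :=
      Finset.sum_congr rfl fun y _ => card_image_inr_range _ _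
    have h1 : ∑ y : Fin n, (deg2 A y - b + b) = ∑ y : Fin n, deg2 A y :=
      Finset.sum_congr rfl fun y _ => by rw [Nat.sub_add_cancel (hb y)]
    have h2 : ∑ y : Fin n, deg2 A y = A.card := by
      have := sum_filter_card A Prod.snd Finset.univ
      simpa [deg2] using this
    rw [Finset.sum_add_distrib, Finset.sum_const, Finset.card_univ, Fintype.card_fin,
      smul_eq_mul] at h1
    have : b * n = n * b := Nat.mul_comm _ _
    omega
  · intro y _ y' _ hyy
    simp only [Finset.disjoint_left, Finset.mem_image, Finset.mem_range]
    rintro v ⟨k, hk, rfl⟩ ⟨k', hk', h⟩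
    have := (Prod.ext_iff.mp (Sum.inr.inj h)).1
    exact hyy this.symm
  · simp only [Finset.disjoint_left, Finset.mem_image, Finset.mem_biUnion]
    rintro v ⟨e, he, rfl⟩ ⟨y, -, k, -, h⟩
    exact nomatch h

lemma card_side2 {a : ℕ} {A : Finset (Fin m × Fin n)} (ha : ∀ x, a ≤ deg1 A x) :
    (side2 a A).card + a * m = A.card + A.card := by
  classical
  rw [side2, Finset.card_union_of_disjoint, Finset.card_image_of_injective _ Sum.inl_injective,
    Finset.card_biUnion]
  · have h0 : ∑ x : Fin m, ((Finset.range (deg1 A x - a)).image fun k => (inr (x, k) : (Fin m × Fin n) ⊕ (Fin m × ℕ))).card = ∑ x : Fin m, (deg1 A x - a) :=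
      Finset.sum_congr rfl fun x _ => card_image_inr_range _ _
    have h1 : ∑ x : Fin m, (deg1 A x - a + a) = ∑ x : Fin m, deg1 A x :=
      Finset.sum_congr rfl fun x _ => by rw [Nat.sub_add_cancel (ha x)]
    have h2 : ∑ x : Fin m, deg1 A x = A.card := by
      have := sum_filter_card A Prod.fst Finset.univ
      simpa [deg1] using this
    rw [Finset.sum_add_distrib, Finset.sum_const, Finset.card_univ, Fintype.card_fin,
      smul_eq_mul] at h1
    have : a * m = m * a := Nat.mul_comm _ _
    omega
  · intro x _ x' _ hxx
    simp only [Finset.disjoint_left, Finset.mem_image, Finset.mem_range]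
    rintro v ⟨k, hk, rfl⟩ ⟨k', hk', h⟩
    have := (Prod.ext_iff.mp (Sum.inr.inj h)).1
    exact hxx this.symm
  · simp only [Finset.disjoint_left, Finset.mem_image, Finset.mem_biUnion]
    rintro v ⟨e, he, rfl⟩ ⟨x, -, k, -, h⟩
    exact nomatch h

end gadget

lemma hall_cond {m n a b : ℕ} {A : Finset (Fin m × Fin n)}
    (ha : ∀ x, a ≤ deg1 A x) (hb : ∀ y, b ≤ deg2 A y)
    (hOre : ∀ (S : Finset (Fin m)) (T : Finset (Fin n)),
      a * S.card ≤ (A.filter fun p => p.1 ∈ S ∧ p.2 ∉ T).card + b * T.card)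
    (s : Finset {v // v ∈ side1 b A}) :
    s.card ≤ (s.biUnion fun v => nbr a A v.1).card := by
  classical
  set s' : Finset ((Fin m × Fin n) ⊕ (Fin n × ℕ)) := s.image Subtype.val with hs'
  have hcs : s'.card = s.card := Finset.card_image_of_injective _ Subtype.val_injective
  set T : Finset (Fin n) :=
    Finset.univ.filter (fun y => ∃ k ∈ Finset.range (deg2 A y - b), (inr (y, k) : (Fin m × Fin n) ⊕ (Fin n × ℕ)) ∈ s') with hT
  set WE : Finset (Fin m × Fin n) := A.filter (fun e => (inl e : (Fin m × Fin n) ⊕ (Fin n × ℕ)) ∈ s') with hWE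
  set S : Finset (Fin m) := WE.image Prod.fst with hS
  -- upper bound on |s|
  have hsub : s' ⊆ WE.image inl ∪ T.biUnion (fun y => (Finset.range (deg2 A y - b)).image fun k => inr (y, k)) := by
    intro v hv
    have hv1 : v ∈ side1 b A := by
      obtain ⟨u, _, rfl⟩ := Finset.mem_image.mp hv; exact u.2
    rcases mem_side1.mp hv1 with ⟨e, he, rfl⟩ | ⟨y, k, hk, rfl⟩
    · exact Finset.mem_union_left _ (Finset.mem_image_of_mem _
        (Finset.mem_filter.mpr ⟨he, hv⟩))
    · refine Finset.mem_union_right _ (Finset.mem_biUnion.mpr ⟨y, ?_, ?_⟩)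
      · exact Finset.mem_filter.mpr ⟨Finset.mem_univ _, ⟨k, Finset.mem_range.mpr hk, hv⟩⟩
      · exact Finset.mem_image.mpr ⟨k, Finset.mem_range.mpr hk, rfl⟩
  have hUB : s.card ≤ WE.card + ∑ y ∈ T, (deg2 A y - b) := by
    calc s.card = s'.card := hcs.symm
      _ ≤ _ := Finset.card_le_card hsub
      _ ≤ (WE.image inl).card + (T.biUnion (fun y => (Finset.range (deg2 A y - b)).image fun k => inr (y, k))).card :=
          Finset.card_union_le _ _
      _ ≤ WE.card + ∑ y ∈ T, (deg2 A y - b) := by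
          refine Nat.add_le_add (Finset.card_image_le) (Finset.card_biUnion_le.trans ?_)
          exact Finset.sum_le_sum fun y _ => Finset.card_image_le.trans_eq (Finset.card_range _)
  -- lower bound on the neighbourhood
  set N : Finset ((Fin m × Fin n) ⊕ (Fin m × ℕ)) := s.biUnion fun v => nbr a A v.1 with hN
  set B1 : Finset ((Fin m × Fin n) ⊕ (Fin m × ℕ)) :=
    (A.filter fun e => (inl e : (Fin m × Fin n) ⊕ (Fin n × ℕ)) ∈ s' ∨ e.2 ∈ T).image inl with hB1
  set B2 : Finset ((Fin m × Fin n) ⊕ (Fin m × ℕ)) :=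
    S.biUnion (fun x => (Finset.range (deg1 A x - a)).image fun k => inr (x, k)) with hB2
  have hB1N : B1 ⊆ N := by
    intro w hw
    obtain ⟨e, he, rfl⟩ := Finset.mem_image.mp hw
    obtain ⟨heA, hcase⟩ := Finset.mem_filter.mp he
    rcases hcase with h | h
    · obtain ⟨u, hu, huv⟩ := Finset.mem_image.mp h
      refine Finset.mem_biUnion.mpr ⟨u, hu, ?_⟩
      rw [huv]
      exact Finset.mem_insert_self _ _
    · obtain ⟨-, k, -, hmem⟩ := Finset.mem_filter.mp h
      obtain ⟨u, hu, huv⟩ := Finset.mem_image.mp hmem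
      refine Finset.mem_biUnion.mpr ⟨u, hu, ?_⟩
      rw [huv]
      show (inl e : (Fin m × Fin n) ⊕ (Fin m × ℕ)) ∈ (A.filter fun q => q.2 = e.2).image inl
      exact Finset.mem_image_of_mem _ (Finset.mem_filter.mpr ⟨heA, rfl⟩)
  have hB2N : B2 ⊆ N := by
    intro w hw
    obtain ⟨x, hx, hw2⟩ := Finset.mem_biUnion.mp hw
    obtain ⟨k, hk, rfl⟩ := Finset.mem_image.mp hw2
    obtain ⟨e, heWE, hex⟩ := Finset.mem_image.mp hx
    obtain ⟨heA, hes⟩ := Finset.mem_filter.mp heWE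
    obtain ⟨u, hu, huv⟩ := Finset.mem_image.mp hes
    refine Finset.mem_biUnion.mpr ⟨u, hu, ?_⟩
    rw [huv]
    show (inr (x, k) : (Fin m × Fin n) ⊕ (Fin m × ℕ)) ∈
      insert (inl e) ((Finset.range (deg1 A e.1 - a)).image fun k => inr (e.1, k))
    subst hex
    exact Finset.mem_insert_of_mem (Finset.mem_image.mpr ⟨k, hk, rfl⟩)
  have hdisj : Disjoint B1 B2 := by
    simp only [hB1, hB2, Finset.disjoint_left, Finset.mem_image, Finset.mem_biUnion]
    rintro w ⟨e, he, rfl⟩ ⟨x, -, k, -, h⟩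
    exact nomatch h
  have hLB : (A.filter fun e => (inl e : (Fin m × Fin n) ⊕ (Fin n × ℕ)) ∈ s' ∨ e.2 ∈ T).card
      + ∑ x ∈ S, (deg1 A x - a) ≤ N.card := by
    have h1 : B1.card = (A.filter fun e => (inl e : (Fin m × Fin n) ⊕ (Fin n × ℕ)) ∈ s' ∨ e.2 ∈ T).card :=
      Finset.card_image_of_injective _ Sum.inl_injective
    have h2 : B2.card = ∑ x ∈ S, (deg1 A x - a) := by
      rw [hB2, Finset.card_biUnion]
      · exact Finset.sum_congr rfl fun x _ => card_image_inr_range _ _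
      · intro x _ x' _ hxx
        simp only [Finset.disjoint_left, Finset.mem_image, Finset.mem_range]
        rintro v ⟨k, hk, rfl⟩ ⟨k', hk', h⟩
        exact hxx (Prod.ext_iff.mp (Sum.inr.inj h)).1.symm
    calc _ = B1.card + B2.card := by rw [h1, h2]
      _ = (B1 ∪ B2).card := (Finset.card_union_of_disjoint hdisj).symm
      _ ≤ N.card := Finset.card_le_card (Finset.union_subset hB1N hB2N)
  -- arithmetic
  have key : WE.card + ∑ y ∈ T, (deg2 A y - b) ≤
      (A.filter fun e => (inl e : (Fin m × Fin n) ⊕ (Fin n × ℕ)) ∈ s' ∨ e.2 ∈ T).card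
      + ∑ x ∈ S, (deg1 A x - a) := by
    -- abbreviations
    have e1 : ∑ y ∈ T, (deg2 A y - b) + b * T.card = ∑ y ∈ T, deg2 A y := by
      have := Finset.sum_congr rfl fun y (_ : y ∈ T) => Nat.sub_add_cancel (hb y)
      rw [← this, Finset.sum_add_distrib, Finset.sum_const, smul_eq_mul, Nat.mul_comm]
    have e2 : ∑ x ∈ S, (deg1 A x - a) + a * S.card = ∑ x ∈ S, deg1 A x := by
      have := Finset.sum_congr rfl fun x (_ : x ∈ S) => Nat.sub_add_cancel (ha x)
      rw [← this, Finset.sum_add_distrib, Finset.sum_const, smul_eq_mul, Nat.mul_comm]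
    have e3 : ∑ y ∈ T, deg2 A y = (A.filter fun e => e.2 ∈ T).card := by
      simpa [deg2] using sum_filter_card A Prod.snd T
    have e4 : ∑ x ∈ S, deg1 A x = (A.filter fun e => e.1 ∈ S).card := by
      simpa [deg1] using sum_filter_card A Prod.fst S
    have e5 : (A.filter fun e => (inl e : (Fin m × Fin n) ⊕ (Fin n × ℕ)) ∈ s' ∨ e.2 ∈ T).card
        = WE.card + (A.filter fun e => ¬ ((inl e : (Fin m × Fin n) ⊕ (Fin n × ℕ)) ∈ s') ∧ e.2 ∈ T).card := by
      have h := Finset.card_filter_add_card_filter_not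
        (s := A.filter fun e => (inl e : (Fin m × Fin n) ⊕ (Fin n × ℕ)) ∈ s' ∨ e.2 ∈ T)
        (p := fun e => (inl e : (Fin m × Fin n) ⊕ (Fin n × ℕ)) ∈ s')
      have r1 : ((A.filter fun e => (inl e : (Fin m × Fin n) ⊕ (Fin n × ℕ)) ∈ s' ∨ e.2 ∈ T).filter
          fun e => (inl e : (Fin m × Fin n) ⊕ (Fin n × ℕ)) ∈ s') = WE := by
        rw [hWE]; ext e; simp only [Finset.mem_filter]; tauto
      have r2 : ((A.filter fun e => (inl e : (Fin m × Fin n) ⊕ (Fin n × ℕ)) ∈ s' ∨ e.2 ∈ T).filter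
          fun e => ¬ ((inl e : (Fin m × Fin n) ⊕ (Fin n × ℕ)) ∈ s'))
          = A.filter fun e => ¬ ((inl e : (Fin m × Fin n) ⊕ (Fin n × ℕ)) ∈ s') ∧ e.2 ∈ T := by
        ext e; simp only [Finset.mem_filter]; tauto
      rw [r1, r2] at h
      exact h.symm
    have e6 : (A.filter fun e => e.2 ∈ T).card
        = (A.filter fun e => ((inl e : (Fin m × Fin n) ⊕ (Fin n × ℕ)) ∈ s') ∧ e.2 ∈ T).card
          + (A.filter fun e => ¬ ((inl e : (Fin m × Fin n) ⊕ (Fin n × ℕ)) ∈ s') ∧ e.2 ∈ T).card := by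
      have h := Finset.card_filter_add_card_filter_not
        (s := A.filter fun e => e.2 ∈ T)
        (p := fun e => (inl e : (Fin m × Fin n) ⊕ (Fin n × ℕ)) ∈ s')
      have r1 : ((A.filter fun e => e.2 ∈ T).filter
          fun e => (inl e : (Fin m × Fin n) ⊕ (Fin n × ℕ)) ∈ s')
          = A.filter fun e => ((inl e : (Fin m × Fin n) ⊕ (Fin n × ℕ)) ∈ s') ∧ e.2 ∈ T := by
        ext e; simp only [Finset.mem_filter]; tauto
      have r2 : ((A.filter fun e => e.2 ∈ T).filter
          fun e => ¬ ((inl e : (Fin m × Fin n) ⊕ (Fin n × ℕ)) ∈ s'))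
          = A.filter fun e => ¬ ((inl e : (Fin m × Fin n) ⊕ (Fin n × ℕ)) ∈ s') ∧ e.2 ∈ T := by
        ext e; simp only [Finset.mem_filter]; tauto
      rw [r1, r2] at h
      exact h.symm
    have e7 : (A.filter fun e => ((inl e : (Fin m × Fin n) ⊕ (Fin n × ℕ)) ∈ s') ∧ e.2 ∈ T).card
        ≤ (A.filter fun e => e.1 ∈ S ∧ e.2 ∈ T).card := by
      apply Finset.card_le_card
      intro e he
      obtain ⟨heA, h1, h2⟩ := Finset.mem_filter.mp he
      refine Finset.mem_filter.mpr ⟨heA, ?_, h2⟩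
      rw [hS]
      exact Finset.mem_image_of_mem _ (by rw [hWE]; exact Finset.mem_filter.mpr ⟨heA, h1⟩)
    have e8 : (A.filter fun e => e.1 ∈ S).card
        = (A.filter fun e => e.1 ∈ S ∧ e.2 ∈ T).card
          + (A.filter fun e => e.1 ∈ S ∧ e.2 ∉ T).card := by
      have h := Finset.card_filter_add_card_filter_not
        (s := A.filter fun e => e.1 ∈ S) (p := fun e => e.2 ∈ T)
      rw [Finset.filter_filter, Finset.filter_filter] at h
      exact h.symm
    have hOST := hOre S T
    generalize a * S.card = aS at hOST e2
    generalize b * T.card = bT at hOST e1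
    omega
  omega

lemma core {m n a b : ℕ} (A : Finset (Fin m × Fin n))
    (hab : a * m = b * n)
    (hOre : ∀ (S : Finset (Fin m)) (T : Finset (Fin n)),
      a * S.card ≤ (A.filter fun p => p.1 ∈ S ∧ p.2 ∉ T).card + b * T.card) :
    ∃ E ⊆ A, (∀ x, (E.filter fun p => p.1 = x).card = a) ∧
      (∀ y, (E.filter fun p => p.2 = y).card = b) := by
  classical
  have ha : ∀ x, a ≤ deg1 A x := by
    intro x
    have := hOre {x} ∅
    simpa [deg1] using this
  have hb : ∀ y, b ≤ deg2 A y := by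
    intro y
    have h := hOre Finset.univ {y}ᶜ
    have hcard : ({y}ᶜ : Finset (Fin n)).card = n - 1 := by simp [Finset.card_compl]
    have hn : 1 ≤ n := Fin.pos y
    rw [hcard] at h
    have hfil : (A.filter fun p => p.1 ∈ (Finset.univ : Finset (Fin m)) ∧ p.2 ∉ ({y}ᶜ : Finset (Fin n))) = A.filter fun p => p.2 = y := by
      apply Finset.filter_congr; intro p _; simp
    rw [hfil] at h
    simp only [Finset.card_univ, Fintype.card_fin] at h
    rw [hab] at h
    have he : b * (n-1) + b = b * n := by rw [← Nat.mul_succ]; congr 1; omega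
    show b ≤ (A.filter fun p => p.2 = y).card
    omega
  obtain ⟨f, hfinj, hf⟩ := (Finset.all_card_le_biUnion_card_iff_exists_injective
    (fun v : {v // v ∈ side1 b A} => nbr a A v.1)).mp (hall_cond ha hb hOre)
  have hcard1 := card_side1 hb
  have hcard2 := card_side2 ha
  have hcards : (side1 b A).card = (side2 a A).card := by
    rw [← hab] at hcard1
    omega
  have hnbr_sub : ∀ v : {v // v ∈ side1 b A}, nbr a A v.1 ⊆ side2 a A := by
    rintro ⟨v, hv⟩
    rcases mem_side1.mp hv with ⟨e, he, rfl⟩ | ⟨y, k, hk, rfl⟩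
    · intro w hw
      simp only [nbr] at hw
      rcases Finset.mem_insert.mp hw with rfl | hw
      · exact mem_side2.mpr (Or.inl ⟨e, he, rfl⟩)
      · obtain ⟨k, hk, rfl⟩ := Finset.mem_image.mp hw
        exact mem_side2.mpr (Or.inr ⟨e.1, k, Finset.mem_range.mp hk, rfl⟩)
    · intro w hw
      simp only [nbr] at hw
      obtain ⟨e, he, rfl⟩ := Finset.mem_image.mp hw
      exact mem_side2.mpr (Or.inl ⟨e, (Finset.mem_filter.mp he).1, rfl⟩)
  have himg : Finset.univ.image f = side2 a A := by
    apply Finset.eq_of_subset_of_card_le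
    · intro w hw
      obtain ⟨v, -, rfl⟩ := Finset.mem_image.mp hw
      exact hnbr_sub v (hf v)
    · rw [Finset.card_image_of_injective _ hfinj, Finset.card_univ, Fintype.card_coe, hcards]
  have hsurj : ∀ w ∈ side2 a A, ∃ v, f v = w := by
    intro w hw
    rw [← himg] at hw
    obtain ⟨v, -, hv⟩ := Finset.mem_image.mp hw
    exact ⟨v, hv⟩
  have hmemA : ∀ e ∈ A, (inl e : (Fin m × Fin n) ⊕ (Fin n × ℕ)) ∈ side1 b A :=
    fun e he => mem_side1.mpr (Or.inl ⟨e, he, rfl⟩)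
  have hpre : ∀ P : Finset ((Fin m × Fin n) ⊕ (Fin m × ℕ)), P ⊆ side2 a A →
      (Finset.univ.filter fun v : {v // v ∈ side1 b A} => f v ∈ P).card = P.card := by
    intro P hP
    have himq : (Finset.univ.filter fun v : {v // v ∈ side1 b A} => f v ∈ P).image f = P := by
      apply Finset.Subset.antisymm
      · intro w hw; obtain ⟨v, hv, rfl⟩ := Finset.mem_image.mp hw
        exact (Finset.mem_filter.mp hv).2
      · intro w hw
        obtain ⟨v, rfl⟩ := hsurj w (hP hw)
        exact Finset.mem_image_of_mem _ (Finset.mem_filter.mpr ⟨Finset.mem_univ _, hw⟩)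
    have hc := congrArg Finset.card himq
    rw [Finset.card_image_of_injective _ hfinj] at hc
    exact hc
  set E : Finset (Fin m × Fin n) := A.filter
    (fun e => ∃ h : (inl e : (Fin m × Fin n) ⊕ (Fin n × ℕ)) ∈ side1 b A, f ⟨inl e, h⟩ = inl e) with hE
  refine ⟨E, Finset.filter_subset _ _, ?_, ?_⟩
  · -- left degrees
    intro x
    set P' : Finset ((Fin m × Fin n) ⊕ (Fin m × ℕ)) :=
      (Finset.range (deg1 A x - a)).image (fun k => inr (x, k)) with hP'
    have hP'sub : P' ⊆ side2 a A := by
      intro w hw; obtain ⟨k, hk, rfl⟩ := Finset.mem_image.mp hw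
      exact mem_side2.mpr (Or.inr ⟨x, k, Finset.mem_range.mp hk, rfl⟩)
    have hP'card : P'.card = deg1 A x - a := card_image_inr_range _ _
    have hQ' := hpre P' hP'sub
    set Vx : Finset {v // v ∈ side1 b A} :=
      Finset.univ.filter (fun v => ∃ e ∈ A, e.1 = x ∧ v.1 = inl e) with hVx
    have hVcard : Vx.card = deg1 A x := by
      have himv : Vx.image Subtype.val = (A.filter fun p => p.1 = x).image inl := by
        apply Finset.Subset.antisymm
        · intro w hw
          obtain ⟨v, hv, rfl⟩ := Finset.mem_image.mp hw
          obtain ⟨-, e, he, hex, hve⟩ := Finset.mem_filter.mp hv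
          rw [hve]
          exact Finset.mem_image_of_mem _ (Finset.mem_filter.mpr ⟨he, hex⟩)
        · intro w hw
          obtain ⟨e, he, rfl⟩ := Finset.mem_image.mp hw
          obtain ⟨heA, hex⟩ := Finset.mem_filter.mp he
          exact Finset.mem_image.mpr ⟨⟨inl e, hmemA e heA⟩,
            Finset.mem_filter.mpr ⟨Finset.mem_univ _, ⟨e, heA, hex, rfl⟩⟩, rfl⟩
      have hc := congrArg Finset.card himv
      rwa [Finset.card_image_of_injective _ Subtype.val_injective,
        Finset.card_image_of_injective _ Sum.inl_injective] at hc
    have hQV : Finset.univ.filter (fun v : {v // v ∈ side1 b A} => f v ∈ P') ⊆ Vx := by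
      rintro ⟨v, hv⟩ hmem
      have hfv := (Finset.mem_filter.mp hmem).2
      rcases mem_side1.mp hv with ⟨e, he, rfl⟩ | ⟨y, k, hk, rfl⟩
      · have hnb := hf ⟨inl e, hv⟩
        obtain ⟨k, hkr, hfk⟩ := Finset.mem_image.mp hfv
        refine Finset.mem_filter.mpr ⟨Finset.mem_univ _, ⟨e, he, ?_, rfl⟩⟩
        simp only [nbr] at hnb
        rcases Finset.mem_insert.mp hnb with h | h
        · rw [h] at hfk; exact absurd hfk (by simp)
        · obtain ⟨k', -, hk'⟩ := Finset.mem_image.mp h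
          rw [← hk'] at hfk
          exact ((Prod.ext_iff.mp (Sum.inr.inj hfk)).1).symm
      · have hnb := hf ⟨inr (y, k), hv⟩
        simp only [nbr] at hnb
        obtain ⟨e, -, hfe⟩ := Finset.mem_image.mp hnb
        obtain ⟨k', -, hfk⟩ := Finset.mem_image.mp hfv
        rw [← hfe] at hfk
        exact absurd hfk (by simp)
    have hsplit := Finset.card_filter_add_card_filter_not (s := Vx)
      (p := fun v => f v ∈ P')
    have hVf : Vx.filter (fun v => f v ∈ P')
        = Finset.univ.filter (fun v : {v // v ∈ side1 b A} => f v ∈ P') := by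
      apply Finset.Subset.antisymm
      · intro v hv
        exact Finset.mem_filter.mpr ⟨Finset.mem_univ _, (Finset.mem_filter.mp hv).2⟩
      · intro v hv
        exact Finset.mem_filter.mpr ⟨hQV hv, (Finset.mem_filter.mp hv).2⟩
    have hEx : (Vx.filter (fun v => ¬ f v ∈ P')).card = (E.filter fun p => p.1 = x).card := by
      have himv : (Vx.filter (fun v => ¬ f v ∈ P')).image Subtype.val
          = (E.filter fun p => p.1 = x).image inl := by
        apply Finset.Subset.antisymm
        · rintro w hw
          obtain ⟨⟨v1, hv1⟩, hv, rfl⟩ := Finset.mem_image.mp hw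
          obtain ⟨hvV, hnP⟩ := Finset.mem_filter.mp hv
          obtain ⟨-, e, heA, hex, hve⟩ := Finset.mem_filter.mp hvV
          simp only at hve
          subst hve
          have hnb := hf ⟨inl e, hv1⟩
          simp only [nbr] at hnb
          rcases Finset.mem_insert.mp hnb with h | h
          · refine Finset.mem_image_of_mem _ ?_
            refine Finset.mem_filter.mpr ⟨?_, hex⟩
            rw [hE]
            exact Finset.mem_filter.mpr ⟨heA, ⟨hv1, h⟩⟩
          · exfalso
            apply hnP
            rw [hP']
            subst hex
            exact h
        · intro w hw
          obtain ⟨e, he, rfl⟩ := Finset.mem_image.mp hw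
          obtain ⟨heE, hex⟩ := Finset.mem_filter.mp he
          rw [hE] at heE
          obtain ⟨heA, hh, hfe⟩ := Finset.mem_filter.mp heE
          refine Finset.mem_image.mpr ⟨⟨inl e, hh⟩, ?_, rfl⟩
          refine Finset.mem_filter.mpr ⟨Finset.mem_filter.mpr ⟨Finset.mem_univ _, ⟨e, heA, hex, rfl⟩⟩, ?_⟩
          rw [hfe]
          rw [hP']
          simp
      have hc := congrArg Finset.card himv
      rwa [Finset.card_image_of_injective _ Subtype.val_injective,
        Finset.card_image_of_injective _ Sum.inl_injective] at hc
    have hfin := hsplit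
    rw [hVf, hQ', hP'card, hEx, hVcard] at hfin
    have := ha x
    omega
  · -- right degrees
    intro y
    set P : Finset ((Fin m × Fin n) ⊕ (Fin m × ℕ)) := (A.filter fun p => p.2 = y).image inl with hP
    have hPsub : P ⊆ side2 a A := by
      intro w hw
      obtain ⟨e, he, rfl⟩ := Finset.mem_image.mp hw
      exact mem_side2.mpr (Or.inl ⟨e, (Finset.mem_filter.mp he).1, rfl⟩)
    have hPcard : P.card = deg2 A y := Finset.card_image_of_injective _ Sum.inl_injective
    have hQ := hpre P hPsub
    set Q := Finset.univ.filter (fun v : {v // v ∈ side1 b A} => f v ∈ P) with hQdef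
    have hsplitQ := Finset.card_filter_add_card_filter_not (s := Q)
      (p := fun v => ∃ e : Fin m × Fin n, v.1 = inl e)
    have h1 : (Q.filter (fun v => ∃ e : Fin m × Fin n, v.1 = inl e)).card
        = (E.filter fun p => p.2 = y).card := by
      have himv : (Q.filter (fun v => ∃ e : Fin m × Fin n, v.1 = inl e)).image Subtype.val
          = (E.filter fun p => p.2 = y).image inl := by
        apply Finset.Subset.antisymm
        · rintro w hw
          obtain ⟨⟨v1, hv1⟩, hv, rfl⟩ := Finset.mem_image.mp hw
          obtain ⟨hvQ, e, hve⟩ := Finset.mem_filter.mp hv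
          simp only at hve
          subst hve
          have heA : e ∈ A := by
            rcases mem_side1.mp hv1 with ⟨e', he', he2⟩ | ⟨y', k, hk, h⟩
            · rwa [inl_injective (he2 : (inl e : (Fin m × Fin n) ⊕ (Fin n × ℕ)) = inl e')] 
            · exact absurd h (by simp)
          have hfv := (Finset.mem_filter.mp hvQ).2
          have hnb := hf ⟨inl e, hv1⟩
          simp only [nbr] at hnb
          have hfeq : f ⟨inl e, hv1⟩ = inl e := by
            rcases Finset.mem_insert.mp hnb with h | h
            · exact h
            · exfalso
              obtain ⟨k, -, hk⟩ := Finset.mem_image.mp h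
              rw [hP] at hfv
              obtain ⟨e', -, he'⟩ := Finset.mem_image.mp hfv
              rw [← hk] at he'
              exact absurd he' (by simp)
          have hey : e.2 = y := by
            rw [hP] at hfv
            obtain ⟨e', he', hee⟩ := Finset.mem_image.mp hfv
            rw [hfeq] at hee
            have : e' = e := inl_injective hee
            subst this
            exact (Finset.mem_filter.mp he').2
          refine Finset.mem_image_of_mem _ (Finset.mem_filter.mpr ⟨?_, hey⟩)
          rw [hE]
          exact Finset.mem_filter.mpr ⟨heA, ⟨hv1, hfeq⟩⟩
        · intro w hw
          obtain ⟨e, he, rfl⟩ := Finset.mem_image.mp hw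
          obtain ⟨heE, hey⟩ := Finset.mem_filter.mp he
          rw [hE] at heE
          obtain ⟨heA, hh, hfe⟩ := Finset.mem_filter.mp heE
          refine Finset.mem_image.mpr ⟨⟨inl e, hh⟩, ?_, rfl⟩
          refine Finset.mem_filter.mpr ⟨?_, ⟨e, rfl⟩⟩
          refine Finset.mem_filter.mpr ⟨Finset.mem_univ _, ?_⟩
          rw [hfe, hP]
          exact Finset.mem_image_of_mem _ (Finset.mem_filter.mpr ⟨heA, hey⟩)
      have hc := congrArg Finset.card himv
      rwa [Finset.card_image_of_injective _ Subtype.val_injective,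
        Finset.card_image_of_injective _ Sum.inl_injective] at hc
    have h2 : (Q.filter (fun v => ¬ ∃ e : Fin m × Fin n, v.1 = inl e)).card = deg2 A y - b := by
      have himv : (Q.filter (fun v => ¬ ∃ e : Fin m × Fin n, v.1 = inl e)).image Subtype.val
          = (Finset.range (deg2 A y - b)).image (fun k => (inr (y, k) : (Fin m × Fin n) ⊕ (Fin n × ℕ))) := by
        apply Finset.Subset.antisymm
        · rintro w hw
          obtain ⟨⟨v1, hv1⟩, hv, rfl⟩ := Finset.mem_image.mp hw
          obtain ⟨hvQ, hnl⟩ := Finset.mem_filter.mp hv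
          rcases mem_side1.mp hv1 with ⟨e, he, he2⟩ | ⟨y', k, hk, h⟩
          · exact absurd ⟨e, he2⟩ hnl
          · subst h
            have hfv := (Finset.mem_filter.mp hvQ).2
            have hnb := hf ⟨inr (y', k), hv1⟩
            simp only [nbr] at hnb
            obtain ⟨e, he, hfe⟩ := Finset.mem_image.mp hnb
            rw [hP] at hfv
            obtain ⟨e', he', hfe'⟩ := Finset.mem_image.mp hfv
            rw [← hfe] at hfe'
            have : e' = e := inl_injective hfe'
            subst this
            have hyy : y' = y := by
              have h1 := (Finset.mem_filter.mp he).2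
              have h2 := (Finset.mem_filter.mp he').2
              rw [← h1, h2]
            subst hyy
            exact Finset.mem_image.mpr ⟨k, Finset.mem_range.mpr hk, rfl⟩
        · intro w hw
          obtain ⟨k, hk, rfl⟩ := Finset.mem_image.mp hw
          have hk' := Finset.mem_range.mp hk
          have hv1 : (inr (y, k) : (Fin m × Fin n) ⊕ (Fin n × ℕ)) ∈ side1 b A :=
            mem_side1.mpr (Or.inr ⟨y, k, hk', rfl⟩)
          refine Finset.mem_image.mpr ⟨⟨inr (y, k), hv1⟩, ?_, rfl⟩
          refine Finset.mem_filter.mpr ⟨?_, by rintro ⟨e, he⟩; cases he⟩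
          refine Finset.mem_filter.mpr ⟨Finset.mem_univ _, ?_⟩
          have hnb := hf ⟨inr (y, k), hv1⟩
          simp only [nbr] at hnb
          rw [hP]
          exact hnb
      have hc := congrArg Finset.card himv
      rw [Finset.card_image_of_injective _ Subtype.val_injective] at hc
      rw [hc]
      exact card_image_inr_range _ _
    have hQcard : Q.card = deg2 A y := by rw [hQdef, hQ, hPcard]
    have := hb y
    omega

/-- Ore's condition (Corollary 3.3): an `(X,Y)`-bipartite graph `G` has an
`(a,b)`-biregular factor iff `a|X| = b|Y|` and
`e_G(S, Y∖T) + b|T| - a|S| ≥ 0` for all `S ⊆ X`, `T ⊆ Y`. -/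
theorem stmt8 (m n a b : ℕ) (G : SimpleGraph (Fin m ⊕ Fin n)) [DecidableRel G.Adj]
    (hX : ∀ i j : Fin m, ¬ G.Adj (inl i) (inl j))
    (hY : ∀ i j : Fin n, ¬ G.Adj (inr i) (inr j)) :
    (∃ F : SimpleGraph (Fin m ⊕ Fin n), F ≤ G ∧
        (∀ i : Fin m, (F.neighborSet (inl i)).ncard = a) ∧
        (∀ j : Fin n, (F.neighborSet (inr j)).ncard = b))
    ↔ (a * m = b * n ∧
        ∀ (S : Finset (Fin m)) (T : Finset (Fin n)),
          a * S.card ≤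
            ((S ×ˢ Tᶜ).filter fun p => G.Adj (inl p.1) (inr p.2)).card + b * T.card) := by
  classical
  constructor
  · rintro ⟨F, hFG, hFa, hFb⟩
    set E : Finset (Fin m × Fin n) :=
      Finset.univ.filter (fun p : Fin m × Fin n => F.Adj (inl p.1) (inr p.2)) with hEdef
    have dx : ∀ i : Fin m, (E.filter fun p => p.1 = i).card = a := by
      intro i
      have hNS : F.neighborSet (inl i)
          = ↑((Finset.univ.filter fun j : Fin n => F.Adj (inl i) (inr j)).image
              (fun j => (inr j : Fin m ⊕ Fin n))) := by
        ext v
        simp only [SimpleGraph.mem_neighborSet, Finset.coe_image, Set.mem_image,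
          Finset.mem_coe, Finset.mem_filter, Finset.mem_univ, true_and]
        constructor
        · intro hadj
          cases v with
          | inl j => exact absurd (hFG hadj) (hX i j)
          | inr j => exact ⟨j, hadj, rfl⟩
        · rintro ⟨j, hadj, rfl⟩; exact hadj
      have hcard := hFa i
      rw [hNS, Set.ncard_coe_finset,
        Finset.card_image_of_injective _ Sum.inr_injective] at hcard
      rw [← hcard]
      have himv : (E.filter fun p => p.1 = i).image Prod.snd
          = Finset.univ.filter fun j : Fin n => F.Adj (inl i) (inr j) := by
        apply Finset.Subset.antisymm
        · intro j hj
          obtain ⟨p, hp, rfl⟩ := Finset.mem_image.mp hj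
          obtain ⟨hpE, hpi⟩ := Finset.mem_filter.mp hp
          obtain ⟨-, hadj⟩ := Finset.mem_filter.mp hpE
          subst hpi
          exact Finset.mem_filter.mpr ⟨Finset.mem_univ _, hadj⟩
        · intro j hj
          obtain ⟨-, hadj⟩ := Finset.mem_filter.mp hj
          exact Finset.mem_image.mpr ⟨(i, j), Finset.mem_filter.mpr
            ⟨Finset.mem_filter.mpr ⟨Finset.mem_univ _, hadj⟩, rfl⟩, rfl⟩
      rw [← himv]
      rw [Finset.card_image_of_injOn]
      intro p hp q hq hpq
      obtain ⟨-, hp1⟩ := Finset.mem_filter.mp hp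
      obtain ⟨-, hq1⟩ := Finset.mem_filter.mp hq
      exact Prod.ext (hp1.trans hq1.symm) hpq
    have dy : ∀ j : Fin n, (E.filter fun p => p.2 = j).card = b := by
      intro j
      have hNS : F.neighborSet (inr j)
          = ↑((Finset.univ.filter fun i : Fin m => F.Adj (inl i) (inr j)).image
              (fun i => (inl i : Fin m ⊕ Fin n))) := by
        ext v
        simp only [SimpleGraph.mem_neighborSet, Finset.coe_image, Set.mem_image,
          Finset.mem_coe, Finset.mem_filter, Finset.mem_univ, true_and]
        constructor
        · intro hadj
          cases v with
          | inl i => exact ⟨i, hadj.symm, rfl⟩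
          | inr j' => exact absurd (hFG hadj) (hY j j')
        · rintro ⟨i, hadj, rfl⟩; exact hadj.symm
      have hcard := hFb j
      rw [hNS, Set.ncard_coe_finset,
        Finset.card_image_of_injective _ Sum.inl_injective] at hcard
      rw [← hcard]
      have himv : (E.filter fun p => p.2 = j).image Prod.fst
          = Finset.univ.filter fun i : Fin m => F.Adj (inl i) (inr j) := by
        apply Finset.Subset.antisymm
        · intro i hi
          obtain ⟨p, hp, rfl⟩ := Finset.mem_image.mp hi
          obtain ⟨hpE, hpj⟩ := Finset.mem_filter.mp hp
          obtain ⟨-, hadj⟩ := Finset.mem_filter.mp hpE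
          subst hpj
          exact Finset.mem_filter.mpr ⟨Finset.mem_univ _, hadj⟩
        · intro i hi
          obtain ⟨-, hadj⟩ := Finset.mem_filter.mp hi
          exact Finset.mem_image.mpr ⟨(i, j), Finset.mem_filter.mpr
            ⟨Finset.mem_filter.mpr ⟨Finset.mem_univ _, hadj⟩, rfl⟩, rfl⟩
      rw [← himv]
      rw [Finset.card_image_of_injOn]
      intro p hp q hq hpq
      obtain ⟨-, hp1⟩ := Finset.mem_filter.mp hp
      obtain ⟨-, hq1⟩ := Finset.mem_filter.mp hq
      exact Prod.ext hpq (hp1.trans hq1.symm)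
    have hEm : E.card = a * m := by
      have h1 : ∑ x : Fin m, (E.filter fun p => p.1 = x).card = E.card := by
        have := sum_filter_card E Prod.fst Finset.univ
        simpa using this
      rw [← h1]
      rw [Finset.sum_congr rfl fun x _ => dx x]
      simp [Nat.mul_comm]
    have hEn : E.card = b * n := by
      have h1 : ∑ y : Fin n, (E.filter fun p => p.2 = y).card = E.card := by
        have := sum_filter_card E Prod.snd Finset.univ
        simpa using this
      rw [← h1]
      rw [Finset.sum_congr rfl fun y _ => dy y]
      simp [Nat.mul_comm]
    refine ⟨by rw [← hEm, hEn], ?_⟩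
    intro S T
    have h1 : a * S.card = (E.filter fun p => p.1 ∈ S).card := by
      rw [← sum_filter_card E Prod.fst S]
      rw [Finset.sum_congr rfl fun x _ => dx x]
      simp [Nat.mul_comm]
    have h2 : (E.filter fun p => p.1 ∈ S).card
        = (E.filter fun p => p.1 ∈ S ∧ p.2 ∉ T).card
          + (E.filter fun p => p.1 ∈ S ∧ p.2 ∈ T).card := by
      have h := Finset.card_filter_add_card_filter_not
        (s := E.filter fun p => p.1 ∈ S) (p := fun p => p.2 ∉ T)
      have r1 : (E.filter fun p => p.1 ∈ S).filter (fun p => p.2 ∉ T)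
          = E.filter fun p => p.1 ∈ S ∧ p.2 ∉ T := by
        ext p; simp only [Finset.mem_filter]; tauto
      have r2 : (E.filter fun p => p.1 ∈ S).filter (fun p => ¬ p.2 ∉ T)
          = E.filter fun p => p.1 ∈ S ∧ p.2 ∈ T := by
        ext p; simp only [Finset.mem_filter]; tauto
      rw [r1, r2] at h
      exact h.symm
    have h3 : (E.filter fun p => p.1 ∈ S ∧ p.2 ∉ T).card
        ≤ ((S ×ˢ Tᶜ).filter fun p => G.Adj (inl p.1) (inr p.2)).card := by
      apply Finset.card_le_card
      intro p hp
      obtain ⟨hpE, hp1, hp2⟩ := Finset.mem_filter.mp hp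
      obtain ⟨-, hadj⟩ := Finset.mem_filter.mp hpE
      exact Finset.mem_filter.mpr ⟨Finset.mem_product.mpr
        ⟨hp1, Finset.mem_compl.mpr hp2⟩, hFG hadj⟩
    have h4 : (E.filter fun p => p.1 ∈ S ∧ p.2 ∈ T).card ≤ b * T.card := by
      have h5 : (E.filter fun p => p.1 ∈ S ∧ p.2 ∈ T).card
          ≤ (E.filter fun p => p.2 ∈ T).card := by
        apply Finset.card_le_card
        intro p hp
        obtain ⟨hpE, -, hp2⟩ := Finset.mem_filter.mp hp
        exact Finset.mem_filter.mpr ⟨hpE, hp2⟩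
      have h6 : (E.filter fun p => p.2 ∈ T).card = b * T.card := by
        rw [← sum_filter_card E Prod.snd T]
        rw [Finset.sum_congr rfl fun y _ => dy y]
        simp [Nat.mul_comm]
      omega
    omega
  · rintro ⟨hab, hcond⟩
    set A : Finset (Fin m × Fin n) :=
      Finset.univ.filter (fun p : Fin m × Fin n => G.Adj (inl p.1) (inr p.2)) with hA
    have hOre : ∀ (S : Finset (Fin m)) (T : Finset (Fin n)),
        a * S.card ≤ (A.filter fun p => p.1 ∈ S ∧ p.2 ∉ T).card + b * T.card := by
      intro S T
      have heq : ((S ×ˢ Tᶜ).filter fun p => G.Adj (inl p.1) (inr p.2))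
          = A.filter fun p => p.1 ∈ S ∧ p.2 ∉ T := by
        ext p
        simp only [hA, Finset.mem_filter, Finset.mem_product, Finset.mem_compl,
          Finset.mem_univ, true_and]
        tauto
      have := hcond S T
      rwa [heq] at this
    obtain ⟨E, hEA, hdx, hdy⟩ := core A hab hOre
    refine ⟨⟨fun u v => ∃ p ∈ E, (u = inl p.1 ∧ v = inr p.2) ∨ (u = inr p.2 ∧ v = inl p.1),
      ?_, ?_⟩, ?_, ?_, ?_⟩
    · constructor; rintro u v ⟨p, hp, (⟨rfl, rfl⟩ | ⟨rfl, rfl⟩)⟩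
      · exact ⟨p, hp, Or.inr ⟨rfl, rfl⟩⟩
      · exact ⟨p, hp, Or.inl ⟨rfl, rfl⟩⟩
    · constructor; rintro u ⟨p, hp, (⟨rfl, h⟩ | ⟨rfl, h⟩)⟩
      · exact nomatch h
      · exact nomatch h.symm
    · rintro u v ⟨p, hp, (⟨rfl, rfl⟩ | ⟨rfl, rfl⟩)⟩
      · have := hEA hp
        rw [hA] at this
        exact (Finset.mem_filter.mp this).2
      · have := hEA hp
        rw [hA] at this
        exact ((Finset.mem_filter.mp this).2).symm
    · intro i
      have hNS : ({v | ∃ p ∈ E, ((inl i : Fin m ⊕ Fin n) = inl p.1 ∧ v = inr p.2) ∨ ((inl i : Fin m ⊕ Fin n) = inr p.2 ∧ v = inl p.1)} : Set (Fin m ⊕ Fin n))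
          = ↑((E.filter fun p => p.1 = i).image (fun p => (inr p.2 : Fin m ⊕ Fin n))) := by
        ext v
        simp only [Set.mem_setOf_eq, Finset.coe_image, Set.mem_image, Finset.mem_coe,
          Finset.mem_filter]
        constructor
        · rintro ⟨p, hp, (⟨hi, rfl⟩ | ⟨hi, -⟩)⟩
          · exact ⟨p, ⟨hp, (inl_injective hi).symm⟩, rfl⟩
          · exact nomatch hi
        · rintro ⟨p, ⟨hp, rfl⟩, rfl⟩
          exact ⟨p, hp, Or.inl ⟨rfl, rfl⟩⟩
      show ({v | ∃ p ∈ E, ((inl i : Fin m ⊕ Fin n) = inl p.1 ∧ v = inr p.2) ∨ ((inl i : Fin m ⊕ Fin n) = inr p.2 ∧ v = inl p.1)} : Set (Fin m ⊕ Fin n)).ncard = a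
      rw [hNS, Set.ncard_coe_finset, Finset.card_image_of_injOn, hdx i]
      intro p hp q hq hpq
      obtain ⟨-, hp1⟩ := Finset.mem_filter.mp hp
      obtain ⟨-, hq1⟩ := Finset.mem_filter.mp hq
      exact Prod.ext (hp1.trans hq1.symm) (Sum.inr_injective hpq)
    · intro j
      have hNS : ({v | ∃ p ∈ E, ((inr j : Fin m ⊕ Fin n) = inl p.1 ∧ v = inr p.2) ∨ ((inr j : Fin m ⊕ Fin n) = inr p.2 ∧ v = inl p.1)} : Set (Fin m ⊕ Fin n))
          = ↑((E.filter fun p => p.2 = j).image (fun p => (inl p.1 : Fin m ⊕ Fin n))) := by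
        ext v
        simp only [Set.mem_setOf_eq, Finset.coe_image, Set.mem_image, Finset.mem_coe,
          Finset.mem_filter]
        constructor
        · rintro ⟨p, hp, (⟨hi, -⟩ | ⟨hi, rfl⟩)⟩
          · exact nomatch hi
          · exact ⟨p, ⟨hp, (inr_injective hi).symm⟩, rfl⟩
        · rintro ⟨p, ⟨hp, rfl⟩, rfl⟩
          exact ⟨p, hp, Or.inr ⟨rfl, rfl⟩⟩
      show ({v | ∃ p ∈ E, ((inr j : Fin m ⊕ Fin n) = inl p.1 ∧ v = inr p.2) ∨ ((inr j : Fin m ⊕ Fin n) = inr p.2 ∧ v = inl p.1)} : Set (Fin m ⊕ Fin n)).ncard = b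
      rw [hNS, Set.ncard_coe_finset, Finset.card_image_of_injOn, hdy j]
      intro p hp q hq hpq
      obtain ⟨-, hp1⟩ := Finset.mem_filter.mp hp
      obtain ⟨-, hq1⟩ := Finset.mem_filter.mp hq
      exact Prod.ext (Sum.inl_injective hpq) (hp1.trans hq1.symm)
end

section
/- Let G be a connected (X,Y)-bipartite graph with |X| = m and |Y| = n, and let f: X → {2,3,4,...}. Then G has a spanning tree T such that d_T(u) ≥ f(u) for all u ∈ X if and only if |N_G(S)| ≥ Σ_{u∈S} f(u) − |S| + 1 for all nonempty subsets S ⊆ X. -/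
open Finset Sum SimpleGraph

set_option maxHeartbeats 1000000
section FGaux

variable {m n : ℕ}

/-- the deficiency function, in ℤ to avoid truncated subtraction -/
def gfun (f : Fin m → ℕ) (N : Fin m → Finset (Fin n)) (S : Finset (Fin m)) : ℤ :=
  ((S.biUnion N).card : ℤ) + S.card - ∑ u ∈ S, (f u : ℤ)

def Cond (f : Fin m → ℕ) (N : Fin m → Finset (Fin n)) : Prop :=
  ∀ S : Finset (Fin m), S.Nonempty → 1 ≤ gfun f N S

lemma gfun_submodular (f : Fin m → ℕ) (N : Fin m → Finset (Fin n)) (S S' : Finset (Fin m)) :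
    gfun f N (S ∪ S') + gfun f N (S ∩ S') ≤ gfun f N S + gfun f N S' := by
  classical
  have h1 : (S ∪ S').biUnion N = S.biUnion N ∪ S'.biUnion N := by
    ext x; simp [Finset.mem_biUnion, Finset.mem_union, or_and_right, exists_or]
  have h2 : (S ∩ S').biUnion N ⊆ S.biUnion N ∩ S'.biUnion N := by
    intro x hx
    simp only [Finset.mem_biUnion, Finset.mem_inter] at hx ⊢
    obtain ⟨u, hu, hxu⟩ := hx
    exact ⟨⟨u, hu.1, hxu⟩, ⟨u, hu.2, hxu⟩⟩
  have hcard : ((S ∪ S').biUnion N).card + ((S ∩ S').biUnion N).card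
      ≤ (S.biUnion N).card + (S'.biUnion N).card := by
    calc ((S ∪ S').biUnion N).card + ((S ∩ S').biUnion N).card
        ≤ (S.biUnion N ∪ S'.biUnion N).card + (S.biUnion N ∩ S'.biUnion N).card := by
          rw [h1]; exact Nat.add_le_add_left (Finset.card_le_card h2) _
      _ = (S.biUnion N).card + (S'.biUnion N).card := Finset.card_union_add_card_inter _ _
  have hc2 : (S ∪ S').card + (S ∩ S').card = S.card + S'.card :=
    Finset.card_union_add_card_inter _ _
  have hs : (∑ u ∈ S ∪ S', (f u : ℤ)) + ∑ u ∈ S ∩ S', (f u : ℤ)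
      = (∑ u ∈ S, (f u : ℤ)) + ∑ u ∈ S', (f u : ℤ) := Finset.sum_union_inter
  unfold gfun
  push_cast
  omega

lemma cond_card_le (f : Fin m → ℕ) (N : Fin m → Finset (Fin n)) (hC : Cond f N) (u : Fin m) :
    (f u : ℤ) ≤ (N u).card := by
  have := hC {u} ⟨u, mem_singleton_self u⟩
  unfold gfun at this
  simp only [Finset.singleton_biUnion, Finset.card_singleton, Finset.sum_singleton] at this
  omega

lemma shrink_step (f : Fin m → ℕ) (N : Fin m → Finset (Fin n)) (hC : Cond f N)
    (u₀ : Fin m) (hbig : (f u₀ : ℤ) + 1 ≤ (N u₀).card) :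
    ∃ x ∈ N u₀, Cond f (Function.update N u₀ ((N u₀).erase x)) := by
  classical
  by_contra hno
  push_neg at hno
  -- for each x ∈ N u₀ there is a tight set containing u₀ avoiding x outside u₀
  have H1 : ∀ x ∈ N u₀, ∃ S : Finset (Fin m), u₀ ∈ S ∧ gfun f N S = 1 ∧
      x ∉ (S.erase u₀).biUnion N := by
    intro x hx
    obtain ⟨S, hSne, hSbad⟩ := by
      have := hno x hx
      unfold Cond at this
      push_neg at this
      exact this
    -- u₀ ∈ S, else biUnion unchanged
    set N' := Function.update N u₀ ((N u₀).erase x) with hN'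
    have hu₀S : u₀ ∈ S := by
      by_contra hu
      have : S.biUnion N' = S.biUnion N := by
        apply Finset.biUnion_congr rfl
        intro v hv
        have : v ≠ u₀ := fun h => hu (h ▸ hv)
        simp [hN', Function.update_of_ne this]
      have hcc := congrArg Finset.card this
      have := hC S hSne
      unfold gfun at *
      omega
    -- compare biUnions
    have hsub : S.biUnion N \ {x} ⊆ S.biUnion N' := by
      intro y hy
      simp only [Finset.mem_sdiff, Finset.mem_singleton, Finset.mem_biUnion] at hy ⊢
      obtain ⟨⟨v, hv, hyv⟩, hyx⟩ := hy
      by_cases hvu : v = u₀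
      · exact ⟨u₀, hu₀S, by simp [hN', Function.update_self, Finset.mem_erase, hyx,
          hvu ▸ hyv]⟩
      · exact ⟨v, hv, by simp [hN', Function.update_of_ne hvu, hyv]⟩
    have hsub2 : S.biUnion N' ⊆ S.biUnion N := by
      intro y hy
      simp only [Finset.mem_biUnion] at hy ⊢
      obtain ⟨v, hv, hyv⟩ := hy
      by_cases hvu : v = u₀
      · subst hvu
        rw [hN', Function.update_self] at hyv
        exact ⟨v, hv, Finset.erase_subset _ _ hyv⟩
      · rw [hN', Function.update_of_ne hvu] at hyv
        exact ⟨v, hv, hyv⟩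
    have hcard1 : (S.biUnion N).card - 1 ≤ (S.biUnion N').card := by
      have h2 := Finset.le_card_sdiff ({x} : Finset (Fin n)) (S.biUnion N)
      have h3 := Finset.card_le_card hsub
      simp only [Finset.card_singleton] at h2
      omega
    have hgS := hC S hSne
    refine ⟨S, hu₀S, ?_, ?_⟩
    · unfold gfun at *
      have h4 := Finset.card_le_card hsub2
      omega
    · -- if x were in (S.erase u₀).biUnion N then biUnion N' S would contain x
      intro hxmem
      have hx' : x ∈ S.biUnion N' := by
        simp only [Finset.mem_biUnion, Finset.mem_erase] at hxmem ⊢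
        obtain ⟨v, ⟨hvne, hvS⟩, hxv⟩ := hxmem
        exact ⟨v, hvS, by rw [hN', Function.update_of_ne hvne]; exact hxv⟩
      -- then S.biUnion N' = S.biUnion N (as x was the only potentially removed elt)
      have : S.biUnion N ⊆ S.biUnion N' := by
        intro y hy
        by_cases hyx : y = x
        · exact hyx ▸ hx'
        · exact hsub (by simp [hy, hyx])
      have := Finset.card_le_card this
      unfold gfun at *
      omega
  -- intersect all these tight sets
  have hNne : (N u₀).Nonempty := by
    rw [← Finset.card_pos]
    omega
  have key : ∀ A : Finset (Fin n), ∃ W : Finset (Fin m), u₀ ∈ W ∧ gfun f N W = 1 ∧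
      ∀ x ∈ A ∩ N u₀, x ∉ (W.erase u₀).biUnion N := by
    intro A
    induction A using Finset.induction_on with
    | empty =>
      obtain ⟨x₀, hx₀⟩ := hNne
      obtain ⟨S, h1, h2, _⟩ := H1 x₀ hx₀
      exact ⟨S, h1, h2, by simp⟩
    | @insert a A' hnotmem ih =>
      obtain ⟨W, hW1, hW2, hW3⟩ := ih
      by_cases ha : a ∈ N u₀
      · obtain ⟨S, hS1, hS2, hS3⟩ := H1 a ha
        refine ⟨W ∩ S, Finset.mem_inter.2 ⟨hW1, hS1⟩, ?_, ?_⟩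
        · have hsub := gfun_submodular f N W S
          have hUne : (W ∪ S).Nonempty := ⟨u₀, Finset.mem_union_left _ hW1⟩
          have hIne : (W ∩ S).Nonempty := ⟨u₀, Finset.mem_inter.2 ⟨hW1, hS1⟩⟩
          have := hC (W ∪ S) hUne
          have := hC (W ∩ S) hIne
          omega
        · intro x hx
          rw [Finset.mem_inter, Finset.mem_insert] at hx
          obtain ⟨hxA | hxA, hxN⟩ := hx
          · subst hxA
            intro hmem
            apply hS3
            exact Finset.biUnion_subset_biUnion_of_subset_left N
              (Finset.erase_subset_erase u₀ Finset.inter_subset_right) hmem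
          · intro hmem
            apply hW3 x (Finset.mem_inter.2 ⟨hxA, hxN⟩)
            exact Finset.biUnion_subset_biUnion_of_subset_left N
              (Finset.erase_subset_erase u₀ Finset.inter_subset_left) hmem
      · refine ⟨W, hW1, hW2, ?_⟩
        intro x hx
        rw [Finset.mem_inter, Finset.mem_insert] at hx
        obtain ⟨hxA | hxA, hxN⟩ := hx
        · exact absurd (hxA ▸ hxN) ha
        · exact hW3 x (Finset.mem_inter.2 ⟨hxA, hxN⟩)
  obtain ⟨W, hWu, hWt, hWav⟩ := key (N u₀)
  simp only [Finset.inter_self] at hWav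
  -- split biUnion over W at u₀
  have hWsplit : W.biUnion N = (W.erase u₀).biUnion N ∪ N u₀ := by
    conv_lhs => rw [← Finset.insert_erase hWu]
    rw [Finset.biUnion_insert, Finset.union_comm]
  have hdisj : Disjoint ((W.erase u₀).biUnion N) (N u₀) :=
    Finset.disjoint_right.2 fun x hx => hWav x hx
  have hcardW : (W.biUnion N).card = ((W.erase u₀).biUnion N).card + (N u₀).card := by
    rw [hWsplit, Finset.card_union_of_disjoint hdisj]
  by_cases hWe : (W.erase u₀).Nonempty
  · have hge := hC (W.erase u₀) hWe
    have hcW : (W.erase u₀).card = W.card - 1 := Finset.card_erase_of_mem hWu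
    have hWpos : 1 ≤ W.card := Finset.card_pos.2 ⟨u₀, hWu⟩
    have hsum : (∑ u ∈ W, (f u : ℤ)) = (∑ u ∈ W.erase u₀, (f u : ℤ)) + f u₀ := by
      rw [← Finset.sum_erase_add W _ hWu]
    unfold gfun at hWt hge
    omega
  · rw [Finset.not_nonempty_iff_eq_empty] at hWe
    have hWsing : W = {u₀} := by
      ext v
      constructor
      · intro hv
        by_cases hvu : v = u₀
        · simp [hvu]
        · exact absurd (Finset.mem_erase.2 ⟨hvu, hv⟩) (by simp [hWe])
      · intro hv
        rw [Finset.mem_singleton] at hv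
        exact hv ▸ hWu
    rw [hWsing] at hWt
    unfold gfun at hWt
    simp only [Finset.singleton_biUnion, Finset.card_singleton, Finset.sum_singleton] at hWt
    omega

lemma stepA (f : Fin m → ℕ) (N : Fin m → Finset (Fin n)) (hC : Cond f N) :
    ∃ F : Fin m → Finset (Fin n), (∀ u, F u ⊆ N u) ∧ (∀ u, (F u).card = f u) ∧ Cond f F := by
  classical
  generalize hk : (∑ u : Fin m, (N u).card) = k
  induction k using Nat.strong_induction_on generalizing N with
  | _ k ih =>
    by_cases hbig : ∃ u₀, (f u₀ : ℤ) + 1 ≤ (N u₀).card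
    · obtain ⟨u₀, hu₀⟩ := hbig
      obtain ⟨x, hx, hC'⟩ := shrink_step f N hC u₀ hu₀
      set N' := Function.update N u₀ ((N u₀).erase x) with hN'
      have hcard' : (∑ u : Fin m, (N' u).card) < k := by
        rw [← hk, hN']
        have : ∀ u : Fin m, (Function.update N u₀ ((N u₀).erase x) u).card ≤ (N u).card := by
          intro u
          by_cases h : u = u₀
          · subst h; rw [Function.update_self]; exact Finset.card_le_card (Finset.erase_subset _ _)
          · rw [Function.update_of_ne h]
        have hlt : (Function.update N u₀ ((N u₀).erase x) u₀).card < (N u₀).card := by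
          rw [Function.update_self, Finset.card_erase_of_mem hx]
          have : 0 < (N u₀).card := Finset.card_pos.2 ⟨x, hx⟩
          omega
        exact Finset.sum_lt_sum (fun u _ => this u) ⟨u₀, Finset.mem_univ u₀, hlt⟩
      obtain ⟨F, hF1, hF2, hF3⟩ := ih _ hcard' N' hC' rfl
      refine ⟨F, fun u => (hF1 u).trans ?_, hF2, hF3⟩
      by_cases h : u = u₀
      · subst h; rw [hN', Function.update_self]; exact Finset.erase_subset _ _
      · rw [hN', Function.update_of_ne h]
    · push_neg at hbig
      refine ⟨N, fun u => subset_rfl, fun u => ?_, hC⟩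
      have h1 := cond_card_le f N hC u
      have h2 := hbig u
      omega

end FGaux

section FGext

variable {V : Type*} [Fintype V] [DecidableEq V]

lemma acyclic_sup_edge {H : SimpleGraph V} (hac : H.IsAcyclic) {c d : V}
    (hne : c ≠ d) (hnr : ¬H.Reachable c d) :
    (H ⊔ fromEdgeSet {s(c, d)}).IsAcyclic := by
  classical
  intro v p hp
  by_cases he : s(c, d) ∈ p.edges
  · -- get reachability of c d in H' minus the edge, which is ≤ H
    have hreach : ((H ⊔ fromEdgeSet {s(c, d)}) \ fromEdgeSet {s(c, d)}).Reachable c d := by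
      have : (H ⊔ fromEdgeSet {s(c, d)}).Adj c d ∧
          ((H ⊔ fromEdgeSet {s(c, d)}) \ fromEdgeSet {s(c, d)}).Reachable c d :=
        (SimpleGraph.adj_and_reachable_delete_edges_iff_exists_cycle).2 ⟨v, p, hp, he⟩
      exact this.2
    apply hnr
    refine hreach.mono ?_
    intro a b hab
    simp only [SimpleGraph.sdiff_adj, SimpleGraph.sup_adj,
      SimpleGraph.fromEdgeSet_adj, Set.mem_singleton_iff] at hab
    tauto
  · -- transfer the cycle to H
    have hsub : ∀ e ∈ p.edges, e ∈ H.edgeSet := by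
      intro e hep
      have : e ∈ (H ⊔ fromEdgeSet {s(c, d)}).edgeSet := p.edges_subset_edgeSet hep
      rw [SimpleGraph.edgeSet_sup, SimpleGraph.edgeSet_fromEdgeSet] at this
      rcases this with h | h
      · exact h
      · exfalso
        obtain ⟨h1, _⟩ := h
        rw [Set.mem_singleton_iff] at h1
        exact he (h1 ▸ hep)
    exact hac (p.transfer H hsub) (hp.transfer hsub)

lemma exists_spanning_tree_ge {G : SimpleGraph V} (hG : G.Connected)
    (H : SimpleGraph V) (hHG : H ≤ G) (hac : H.IsAcyclic) :
    ∃ T : SimpleGraph V, H ≤ T ∧ T ≤ G ∧ T.IsTree := by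
  classical
  generalize hk : (G.edgeSet \ H.edgeSet).ncard = k
  induction k using Nat.strong_induction_on generalizing H with
  | _ k ih =>
    by_cases hconn : H.Connected
    · exact ⟨H, le_refl H, hHG, ⟨hconn, hac⟩⟩
    · -- find a G-edge between two H-components
      have hne : Nonempty V := hG.nonempty
      have : ¬ H.Preconnected := fun hp => hconn ⟨hp⟩
      rw [SimpleGraph.Preconnected] at this
      push_neg at this
      obtain ⟨a, b, hab⟩ := this
      have hWalk : ∀ {x y : V} (w : G.Walk x y), ¬H.Reachable x y →
          ∃ c d, G.Adj c d ∧ ¬H.Reachable c d := by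
        intro x y w
        induction w with
        | nil => intro hxy; exact absurd (Reachable.refl _) hxy
        | @cons x' c' y' h q ihq =>
          intro hxy
          by_cases hr : H.Reachable x' c'
          · exact ihq (fun hcy => hxy (hr.trans hcy))
          · exact ⟨x', c', h, hr⟩
      obtain ⟨c, d, hcd, hcdr⟩ := hWalk ((hG.preconnected a b).some) hab
      have hne' : c ≠ d := fun h => hcdr (h ▸ Reachable.refl _)
      set H' := H ⊔ fromEdgeSet {s(c, d)} with hH'
      have hH'G : H' ≤ G := by
        rw [hH']
        apply sup_le hHG
        intro x y hxy
        simp only [SimpleGraph.fromEdgeSet_adj, Set.mem_singleton_iff] at hxy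
        obtain ⟨h1, _⟩ := hxy
        rw [Sym2.eq_iff] at h1
        rcases h1 with ⟨rfl, rfl⟩ | ⟨rfl, rfl⟩
        · exact hcd
        · exact hcd.symm
      have hac' : H'.IsAcyclic := acyclic_sup_edge hac hne' hcdr
      have hedge : H'.edgeSet = insert s(c, d) H.edgeSet := by
        rw [hH', SimpleGraph.edgeSet_sup, SimpleGraph.edgeSet_fromEdgeSet]
        ext e
        simp only [Set.mem_union, Set.mem_diff, Set.mem_singleton_iff, Set.mem_insert_iff]
        constructor
        · rintro (h | ⟨h, _⟩)
          · exact Or.inr h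
          · exact Or.inl h
        · rintro (rfl | h)
          · exact Or.inr ⟨rfl, by simp [hne']⟩
          · exact Or.inl h
      have hmeas : (G.edgeSet \ H'.edgeSet).ncard < k := by
        rw [← hk]
        apply Set.ncard_lt_ncard
        · constructor
          · intro e he
            rw [hedge] at he
            exact ⟨he.1, fun h => he.2 (Set.mem_insert_of_mem _ h)⟩
          · intro hsub
            have h1 : s(c, d) ∈ G.edgeSet \ H.edgeSet := by
              refine ⟨hcd, fun h => hcdr ?_⟩
              exact (SimpleGraph.Adj.reachable (by rwa [← SimpleGraph.mem_edgeSet]))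
            have h2 := hsub h1
            rw [hedge] at h2
            exact h2.2 (Set.mem_insert _ _)
        · exact (G.edgeSet \ H.edgeSet).toFinite
      obtain ⟨T, hT1, hT2, hT3⟩ := ih _ hmeas H' hH'G hac' rfl
      exact ⟨T, le_trans le_sup_left hT1, hT2, hT3⟩


lemma tree_edge_bound (T : SimpleGraph V) (hT : T.IsTree) (r : V)
    (E' : Finset (Sym2 V)) (W : Finset V)
    (hE' : ∀ e ∈ E', ∃ x y : V, e = s(x, y) ∧ T.Adj x y ∧ x ∈ W ∧ y ∈ W)
    (hr : r ∈ W) : E'.card + 1 ≤ W.card := by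
  classical
  -- canonical paths to the root
  have hEU := hT.existsUnique_path
  set P : ∀ v : V, T.Walk v r := fun v => (hEU v r).choose with hPdef
  have hP : ∀ v, (P v).IsPath := fun v => (hEU v r).choose_spec.1
  have hPu : ∀ v (q : T.Walk v r), q.IsPath → P v = q := fun v q hq =>
    ((hEU v r).choose_spec.2 _ (hP v) ▸ (hEU v r).choose_spec.2 _ hq).symm
  set par : V → V := fun v => (P v).getVert 1 with hpar
  set ℓ : V → ℕ := fun v => (P v).length with hℓ
  have hPr : ℓ r = 0 := by
    have : P r = Walk.nil := hPu r Walk.nil Walk.IsPath.nil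
    simp [hℓ, this]
  -- being on someone's path strictly decreases length
  have hdrop : ∀ a b : V, a ≠ b → ∀ (h : a ∈ (P b).support), ℓ a < ℓ b := by
    intro a b hab h
    have hQ : P a = (P b).dropUntil a h := hPu a _ ((hP b).dropUntil h)
    have hspec := congrArg Walk.length ((P b).take_spec h)
    rw [Walk.length_append] at hspec
    have htk : ((P b).takeUntil a h).length ≠ 0 := by
      intro h0
      exact hab (Walk.eq_of_length_eq_zero h0).symm
    have hQl : ℓ a = ((P b).dropUntil a h).length := by rw [hℓ]; simp only; rw [hQ]
    have : ℓ b = (P b).length := rfl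
    omega
  -- edge classification
  have hclass : ∀ a b : V, T.Adj a b →
      (par a = b ∧ ℓ a = ℓ b + 1) ∨ (par b = a ∧ ℓ b = ℓ a + 1) := by
    intro a b hadj
    by_cases h1 : a ∈ (P b).support
    · have hlt := hdrop a b hadj.ne h1
      have hbnot : b ∉ (P a).support := by
        intro h2
        have := hdrop b a hadj.ne.symm h2
        omega
      right
      have hW : P b = Walk.cons hadj.symm (P a) := hPu b _ ((hP a).cons hbnot)
      constructor
      · rw [hpar]; simp only; rw [hW]
        exact (Walk.getVert_cons_succ _ _).trans (Walk.getVert_zero _)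
      · rw [hℓ]; simp only; rw [hW, Walk.length_cons]
    · left
      have hW : P a = Walk.cons hadj (P b) := hPu a _ ((hP b).cons h1)
      constructor
      · rw [hpar]; simp only; rw [hW]
        exact (Walk.getVert_cons_succ _ _).trans (Walk.getVert_zero _)
      · rw [hℓ]; simp only; rw [hW, Walk.length_cons]
  -- each edge of E' is s(c, par c) for a unique non-root vertex c ∈ W
  have hmain : E' ⊆ (W.erase r).image (fun c => s(c, par c)) := by
    intro e he
    obtain ⟨x, y, rfl, hadj, hxW, hyW⟩ := hE' e he
    rcases hclass x y hadj with ⟨hp, hl⟩ | ⟨hp, hl⟩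
    · refine Finset.mem_image.2 ⟨x, Finset.mem_erase.2 ⟨?_, hxW⟩, by rw [hp]⟩
      intro hxr
      rw [hxr] at hl
      omega
    · refine Finset.mem_image.2 ⟨y, Finset.mem_erase.2 ⟨?_, hyW⟩, ?_⟩
      · intro hyr
        rw [hyr] at hl
        omega
      · rw [hp]
        exact Sym2.eq_swap
  have h1 := Finset.card_le_card hmain
  have h2 := Finset.card_image_le (s := W.erase r) (f := fun c => s(c, par c))
  have h3 : (W.erase r).card = W.card - 1 := Finset.card_erase_of_mem hr
  have h4 : 1 ≤ W.card := Finset.card_pos.2 ⟨r, hr⟩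
  omega

end FGext

section FGstar

variable {m n : ℕ}


lemma starGraph_acyclic (f : Fin m → ℕ) (F : Fin m → Finset (Fin n))
    (hcard : ∀ u, (F u).card = f u) (hC : Cond f F) :
    (SimpleGraph.fromEdgeSet {e : Sym2 (Fin m ⊕ Fin n) |
        ∃ u j, e = s(inl u, inr j) ∧ j ∈ F u}).IsAcyclic := by
  classical
  intro v c hc
  have hEdge : ∀ e ∈ c.edges, ∃ u j, e = s(inl u, inr j) ∧ j ∈ F u := by
    intro e he
    have := c.edges_subset_edgeSet he
    rw [SimpleGraph.edgeSet_fromEdgeSet] at this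
    exact this.1
  set P : Finset (Fin m × Fin n) :=
    univ.filter (fun p => s(inl p.1, inr p.2) ∈ c.edges) with hP
  have hmk_inj : ∀ (u u' : Fin m) (j j' : Fin n),
      s(inl u, inr j) = s((inl u' : Fin m ⊕ Fin n), inr j') → u = u' ∧ j = j' := by
    intro u u' j j' h
    rw [Sym2.eq_iff] at h
    rcases h with ⟨h1, h2⟩ | ⟨h1, h2⟩
    · exact ⟨inl_injective h1, inr_injective h2⟩
    · exact absurd h1 (by simp)
  -- edges toFinset = image of P
  have hedgefin : c.edges.toFinset = P.image (fun p => s(inl p.1, inr p.2)) := by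
    ext e
    simp only [List.mem_toFinset, Finset.mem_image, hP, Finset.mem_filter, Finset.mem_univ,
      true_and]
    constructor
    · intro he
      obtain ⟨u, j, rfl, _⟩ := hEdge e he
      exact ⟨(u, j), he, rfl⟩
    · rintro ⟨p, hp, rfl⟩
      exact hp
  have hinjP : Set.InjOn (fun p : Fin m × Fin n => s((inl p.1 : Fin m ⊕ Fin n), inr p.2)) P := by
    intro p _ q _ h
    obtain ⟨h1, h2⟩ := hmk_inj _ _ _ _ h
    exact Prod.ext h1 h2
  have hcardP : P.card = c.length := by
    have h1 : c.edges.toFinset.card = c.edges.length :=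
      List.toFinset_card_of_nodup hc.edges_nodup
    rw [hedgefin, Finset.card_image_of_injOn hinjP] at h1
    rw [h1, SimpleGraph.Walk.length_edges]
  set S : Finset (Fin m) := P.image Prod.fst with hS
  set Ty : Finset (Fin n) := P.image Prod.snd with hTy
  -- membership facts
  have hmemF : ∀ p ∈ P, p.2 ∈ F p.1 := by
    intro p hp
    rw [hP, Finset.mem_filter] at hp
    obtain ⟨u, j, he, hj⟩ := hEdge _ hp.2
    obtain ⟨h1, h2⟩ := hmk_inj _ _ _ _ he.symm
    rw [h2, h1] at hj
    exact hj
  -- edge count bound: card P ≤ ∑ u in S, (F u ∩ Ty).card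
  have hPsub : P ⊆ S.biUnion (fun u => (F u ∩ Ty).image (Prod.mk u)) := by
    intro p hp
    rw [Finset.mem_biUnion]
    refine ⟨p.1, Finset.mem_image_of_mem _ hp, ?_⟩
    rw [Finset.mem_image]
    exact ⟨p.2, Finset.mem_inter.2 ⟨hmemF p hp, Finset.mem_image_of_mem _ hp⟩, rfl⟩
  have hedgebound : P.card ≤ ∑ u ∈ S, (F u ∩ Ty).card :=
    (Finset.card_le_card hPsub).trans <| (Finset.card_biUnion_le).trans <|
      Finset.sum_le_sum fun u _ => Finset.card_image_le
  -- vertex count: S.card + Ty.card ≤ c.length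
  have hdne : c.darts ≠ [] := by
    have h3 := hc.three_le_length
    have := c.length_darts
    intro hnil
    rw [hnil] at this
    simp at this
    omega
  have hvtail : v ∈ c.support.tail := by
    have h1 : (c.darts.getLast hdne).snd = v := by rw [c.getLast_darts_eq_lastDart hdne]; rfl
    have h2 : (c.darts.getLast hdne).snd ∈ c.darts.map (fun d => d.snd) :=
      List.mem_map_of_mem (List.getLast_mem hdne)
    rw [c.map_snd_darts] at h2
    rwa [h1] at h2
  have htail : ∀ x ∈ c.support, x ∈ c.support.tail := by
    intro x hx
    rw [c.support_eq_cons] at hx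
    rcases List.mem_cons.1 hx with rfl | h
    · exact hvtail
    · exact h
  have hvertsub : S.image (inl : Fin m → Fin m ⊕ Fin n) ∪ Ty.image inr
      ⊆ c.support.tail.toFinset := by
    intro x hx
    rw [List.mem_toFinset]
    rcases Finset.mem_union.1 hx with h | h
    · obtain ⟨u, hu, rfl⟩ := Finset.mem_image.1 h
      obtain ⟨p, hp, rfl⟩ := Finset.mem_image.1 hu
      rw [hP, Finset.mem_filter] at hp
      exact htail _ (c.fst_mem_support_of_mem_edges hp.2)
    · obtain ⟨j, hj, rfl⟩ := Finset.mem_image.1 h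
      obtain ⟨p, hp, rfl⟩ := Finset.mem_image.1 hj
      rw [hP, Finset.mem_filter] at hp
      exact htail _ (c.snd_mem_support_of_mem_edges hp.2)
  have hvert : S.card + Ty.card ≤ c.length := by
    have h1 : (S.image (inl : Fin m → Fin m ⊕ Fin n) ∪ Ty.image inr).card
        = S.card + Ty.card := by
      rw [Finset.card_union_of_disjoint, Finset.card_image_of_injective _ inl_injective,
        Finset.card_image_of_injective _ inr_injective]
      rw [Finset.disjoint_left]
      rintro x hx hy
      obtain ⟨u, _, rfl⟩ := Finset.mem_image.1 hx
      obtain ⟨j, _, h⟩ := Finset.mem_image.1 hy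
      exact absurd h (by simp)
    have h2 := Finset.card_le_card hvertsub
    have h3 : c.support.tail.toFinset.card ≤ c.support.tail.length :=
      c.support.tail.toFinset_card_le
    have h5 : c.support.length = c.support.tail.length + 1 := by
      conv_lhs => rw [c.support_eq_cons]
      simp
    have h6 := c.length_support
    omega
  -- S nonempty
  have hSne : S.Nonempty := by
    have h3 := hc.three_le_length
    rw [← hcardP] at h3
    obtain ⟨p, hp⟩ := Finset.card_pos.1 (show 0 < P.card by omega)
    exact ⟨p.1, Finset.mem_image_of_mem _ hp⟩
  -- counting contradiction
  have hsum : ∀ u ∈ S, (F u ∩ Ty).card + (F u \ Ty).card = f u := by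
    intro u _
    rw [Finset.card_inter_add_card_sdiff, hcard]
  have hbiUnion : (S.biUnion F).card ≤ Ty.card + ∑ u ∈ S, (F u \ Ty).card := by
    have hsub : S.biUnion F ⊆ Ty ∪ S.biUnion (fun u => F u \ Ty) := by
      intro x hx
      obtain ⟨u, hu, hxu⟩ := Finset.mem_biUnion.1 hx
      by_cases hxT : x ∈ Ty
      · exact Finset.mem_union_left _ hxT
      · exact Finset.mem_union_right _ (Finset.mem_biUnion.2 ⟨u, hu, Finset.mem_sdiff.2 ⟨hxu, hxT⟩⟩)
    calc (S.biUnion F).card ≤ (Ty ∪ S.biUnion (fun u => F u \ Ty)).card :=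
          Finset.card_le_card hsub
      _ ≤ Ty.card + (S.biUnion (fun u => F u \ Ty)).card := Finset.card_union_le _ _
      _ ≤ Ty.card + ∑ u ∈ S, (F u \ Ty).card :=
          Nat.add_le_add_left Finset.card_biUnion_le _
  have hCS := hC S hSne
  unfold gfun at hCS
  have hsplit : (∑ u ∈ S, (f u : ℤ)) = (∑ u ∈ S, ((F u ∩ Ty).card : ℤ))
      + ∑ u ∈ S, ((F u \ Ty).card : ℤ) := by
    rw [← Finset.sum_add_distrib]
    apply Finset.sum_congr rfl
    intro u hu
    have := hsum u hu
    push_cast [← this]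
    ring
  have he' : (P.card : ℤ) ≤ ∑ u ∈ S, ((F u ∩ Ty).card : ℤ) := by
    exact_mod_cast hedgebound
  have hv' : (S.card : ℤ) + Ty.card ≤ c.length := by exact_mod_cast hvert
  have hb' : ((S.biUnion F).card : ℤ) ≤ Ty.card + ∑ u ∈ S, ((F u \ Ty).card : ℤ) := by
    exact_mod_cast hbiUnion
  have hcP : (P.card : ℤ) = c.length := by exact_mod_cast hcardP
  omega

end FGstar

/-- Frank–Gyárfás / Kaneko–Yoshimoto theorem: a connected `(X,Y)`-bipartite graph `G`
has a spanning tree `T` with `d_T(u) ≥ f(u)` for all `u ∈ X` iff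
`|N_G(S)| ≥ Σ_{u∈S} f(u) - |S| + 1` for all nonempty `S ⊆ X`. -/
theorem stmt10 (m n : ℕ) (G : SimpleGraph (Fin m ⊕ Fin n))
    (hX : ∀ i j : Fin m, ¬ G.Adj (inl i) (inl j))
    (hY : ∀ i j : Fin n, ¬ G.Adj (inr i) (inr j))
    (hconn : G.Connected) (f : Fin m → ℕ) (hf : ∀ u, 2 ≤ f u) :
    (∃ T : SimpleGraph (Fin m ⊕ Fin n), T ≤ G ∧ T.IsTree ∧
        ∀ u : Fin m, f u ≤ (T.neighborSet (inl u)).ncard)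
    ↔ ∀ S : Finset (Fin m), S.Nonempty →
        (∑ u ∈ S, f u) + 1 ≤
          {j : Fin n | ∃ i ∈ S, G.Adj (inl i) (inr j)}.ncard + S.card := by
  classical
  constructor
  · -- forward direction
    rintro ⟨T, hTG, hTtree, hdeg⟩ S hS
    obtain ⟨u₀, hu₀⟩ := hS
    letI : DecidableRel T.Adj := Classical.decRel _
    set NS : Finset (Fin n) := univ.filter (fun j => ∃ i ∈ S, G.Adj (inl i) (inr j)) with hNS
    have hncard : {j : Fin n | ∃ i ∈ S, G.Adj (inl i) (inr j)}.ncard = NS.card := by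
      rw [show {j : Fin n | ∃ i ∈ S, G.Adj (inl i) (inr j)} = ↑NS by
        ext j; simp [hNS]]
      exact Set.ncard_coe_finset _
    set W : Finset (Fin m ⊕ Fin n) := S.image inl ∪ NS.image inr with hW
    set E' : Finset (Sym2 (Fin m ⊕ Fin n)) :=
      S.biUnion (fun u => (T.neighborFinset (inl u)).image (fun x => s(inl u, x))) with hE'
    -- each inl-neighbor is an inr vertex adjacent in G
    have hnb : ∀ u ∈ S, ∀ x ∈ T.neighborFinset (inl u), ∃ j : Fin n,
        x = inr j ∧ j ∈ NS := by
      intro u hu x hx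
      rw [SimpleGraph.mem_neighborFinset] at hx
      have hGadj : G.Adj (inl u) x := hTG hx
      match x with
      | inl u' => exact absurd hGadj (hX u u')
      | inr j =>
        refine ⟨j, rfl, ?_⟩
        rw [hNS, Finset.mem_filter]
        exact ⟨Finset.mem_univ _, u, hu, hGadj⟩
    -- the E' hypothesis of the tree bound
    have hE'good : ∀ e ∈ E', ∃ x y : Fin m ⊕ Fin n, e = s(x, y) ∧ T.Adj x y ∧ x ∈ W ∧ y ∈ W := by
      intro e he
      rw [hE', Finset.mem_biUnion] at he
      obtain ⟨u, hu, he2⟩ := he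
      obtain ⟨x, hx, rfl⟩ := Finset.mem_image.1 he2
      obtain ⟨j, rfl, hj⟩ := hnb u hu x hx
      refine ⟨inl u, inr j, rfl, (SimpleGraph.mem_neighborFinset _ _ _).1 hx, ?_, ?_⟩
      · exact Finset.mem_union_left _ (Finset.mem_image_of_mem _ hu)
      · exact Finset.mem_union_right _ (Finset.mem_image_of_mem _ hj)
    -- cardinality of E' is the sum of degrees
    have hcardE : E'.card = ∑ u ∈ S, T.degree (inl u) := by
      rw [hE', Finset.card_biUnion]
      · apply Finset.sum_congr rfl
        intro u _
        rw [Finset.card_image_of_injective, SimpleGraph.card_neighborFinset_eq_degree]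
        intro x y hxy
        rwa [Sym2.congr_right] at hxy
      · intro u hu u' hu' huu'
        rw [Function.onFun, Finset.disjoint_left]
        rintro e he he'
        obtain ⟨x, hx, rfl⟩ := Finset.mem_image.1 he
        obtain ⟨x', hx', hx'e⟩ := Finset.mem_image.1 he'
        rw [Sym2.eq_iff] at hx'e
        rcases hx'e with ⟨h1, h2⟩ | ⟨h1, h2⟩
        · exact huu' (inl_injective h1).symm
        · rw [← h1] at hx
          rw [SimpleGraph.mem_neighborFinset] at hx
          exact hX u u' (hTG hx)
    have hdeg' : ∀ u ∈ S, f u ≤ T.degree (inl u) := by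
      intro u _
      have h1 := hdeg u
      rwa [Set.ncard_eq_toFinset_card' (T.neighborSet (inl u))] at h1
    have hsum : (∑ u ∈ S, f u) ≤ E'.card := by
      rw [hcardE]
      exact Finset.sum_le_sum hdeg'
    have hcardW : W.card = S.card + NS.card := by
      rw [hW, Finset.card_union_of_disjoint, Finset.card_image_of_injective _ inl_injective,
        Finset.card_image_of_injective _ inr_injective]
      rw [Finset.disjoint_left]
      rintro x hx hy
      obtain ⟨u, _, rfl⟩ := Finset.mem_image.1 hx
      obtain ⟨j, _, h⟩ := Finset.mem_image.1 hy
      exact absurd h (by simp)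
    have hbound := tree_edge_bound T hTtree (inl u₀) E' W hE'good
      (Finset.mem_union_left _ (Finset.mem_image_of_mem _ hu₀))
    rw [hncard]
    omega
  · -- backward direction
    intro hcond
    set N : Fin m → Finset (Fin n) := fun u => univ.filter (fun j => G.Adj (inl u) (inr j))
      with hN
    have hCond : Cond f N := by
      intro S hS
      have h1 := hcond S hS
      have h2 : {j : Fin n | ∃ i ∈ S, G.Adj (inl i) (inr j)}.ncard = (S.biUnion N).card := by
        rw [show {j : Fin n | ∃ i ∈ S, G.Adj (inl i) (inr j)} = ↑(S.biUnion N) by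
          ext j
          simp [hN, Finset.mem_biUnion]]
        exact Set.ncard_coe_finset _
      rw [h2] at h1
      zify at h1
      push_cast at h1
      unfold gfun
      omega
    obtain ⟨F, hF1, hF2, hF3⟩ := stepA f N hCond
    set H : SimpleGraph (Fin m ⊕ Fin n) := SimpleGraph.fromEdgeSet
      {e : Sym2 (Fin m ⊕ Fin n) | ∃ u j, e = s(inl u, inr j) ∧ j ∈ F u} with hH
    have hHG : H ≤ G := by
      intro a b hab
      rw [hH, SimpleGraph.fromEdgeSet_adj] at hab
      obtain ⟨⟨u, j, heq, hj⟩, hne⟩ := hab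
      have hGadj : G.Adj (inl u) (inr j) := by
        have := hF1 u hj
        rw [hN] at this
        simpa using this
      rw [Sym2.eq_iff] at heq
      rcases heq with ⟨rfl, rfl⟩ | ⟨rfl, rfl⟩
      · exact hGadj
      · exact hGadj.symm
    have hac : H.IsAcyclic := starGraph_acyclic f F hF2 hF3
    obtain ⟨T, hHT, hTG, hTtree⟩ := exists_spanning_tree_ge hconn H hHG hac
    refine ⟨T, hTG, hTtree, ?_⟩
    intro u
    have hsub : (fun j => (inr j : Fin m ⊕ Fin n)) '' ↑(F u) ⊆ T.neighborSet (inl u) := by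
      rintro x ⟨j, hj, rfl⟩
      apply hHT
      rw [hH, SimpleGraph.fromEdgeSet_adj]
      exact ⟨⟨u, j, rfl, hj⟩, by simp⟩
    calc f u = ((F u : Set (Fin n))).ncard := by rw [Set.ncard_coe_finset, hF2]
      _ = ((fun j => (inr j : Fin m ⊕ Fin n)) '' ↑(F u)).ncard :=
          (Set.ncard_image_of_injective _ inr_injective).symm
      _ ≤ (T.neighborSet (inl u)).ncard :=
          Set.ncard_le_ncard hsub (Set.toFinite _)
end
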